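/- arXiv:2212.14681 — 9 statements merged into one kernel-verified Lean document; each statement's English description precedes it below -/
import Mathlib

section
/- Let R > 0 and let f : (-R, R) → ℝ be differentiable with M₂-Lipschitz derivative (M₂-smooth). Then for every 0 < γ ≤ 1, the function x ↦ f(γx)/γ − f'(0)·x is (γ·M₂·R)-Lipschitz on (-R, R); that is, for all x, y ∈ (-R, R), |(f(γx)/γ − f'(0)x) − (f(γy)/γ − f'(0)y)| ≤ γ·M₂·R·|x − y|. -/
/-! The derivative of `x ↦ f(γx)/γ - f'(0)x` is `f'(γx) - f'(0)`, which the Lipschitz bound on `f'`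
makes at most `M₂·γ|x| ≤ γM₂R` in absolute value; the mean value inequality on the convex interval
`(-R, R)` concludes. -/

open Set

theorem HasDerivAt.dilation_sub_linear {f : ℝ → ℝ} {d γ a x : ℝ} (hγ : γ ≠ 0)
    (hf : HasDerivAt f d (γ * x)) :
    HasDerivAt (fun z => f (γ * z) / γ - a * z) (d - a) x := by
  have hcomp : HasDerivAt (fun z => f (γ * z)) (d * γ) x := by
    simpa [Function.comp_def, mul_comm] using hf.comp x ((hasDerivAt_id x).const_mul γ)
  have h := (hcomp.div_const γ).sub ((hasDerivAt_id x).const_mul a)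
  rwa [mul_one, mul_div_cancel_right₀ d hγ] at h

theorem nonneg_of_abs_sub_le_mul_abs_sub {g : ℝ → ℝ} {M x y : ℝ} (hxy : x ≠ y)
    (h : |g x - g y| ≤ M * |x - y|) : 0 ≤ M :=
  nonneg_of_mul_nonneg_left ((abs_nonneg _).trans h) (abs_pos.2 (sub_ne_zero.2 hxy))

theorem mul_mem_Ioo_neg {R γ z : ℝ} (h0 : (0 : ℝ) ∈ Ioo (-R) R) (hz : z ∈ Ioo (-R) R)
    (hγ0 : 0 ≤ γ) (hγ1 : γ ≤ 1) : γ * z ∈ Ioo (-R) R :=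
  (convex_Ioo (-R) R).smul_mem_of_zero_mem h0 hz ⟨hγ0, hγ1⟩

theorem abs_apply_mul_sub_apply_zero_le {g : ℝ → ℝ} {R M γ z : ℝ} (hR : 0 < R)
    (hg : ∀ x ∈ Ioo (-R) R, ∀ y ∈ Ioo (-R) R, |g x - g y| ≤ M * |x - y|)
    (hγ0 : 0 ≤ γ) (hγ1 : γ ≤ 1) (hz : z ∈ Ioo (-R) R) :
    |g (γ * z) - g 0| ≤ γ * M * R := by
  have h0 : (0 : ℝ) ∈ Ioo (-R) R := ⟨neg_lt_zero.2 hR, hR⟩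
  have hM : 0 ≤ M :=
    nonneg_of_abs_sub_le_mul_abs_sub (half_pos hR).ne'
      (hg (R / 2) ⟨by linarith, by linarith⟩ 0 h0)
  have hzR : |z| ≤ R := (abs_lt.2 hz).le
  calc |g (γ * z) - g 0| ≤ M * |γ * z - 0| := hg _ (mul_mem_Ioo_neg h0 hz hγ0 hγ1) 0 h0
    _ = γ * M * |z| := by rw [sub_zero, abs_mul, abs_of_nonneg hγ0]; ring
    _ ≤ γ * M * R := by gcongr

theorem dilation_sub_linear_lipschitz_general
    (R M₂ : ℝ) (f f' : ℝ → ℝ)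
    (hderiv : ∀ x ∈ Set.Ioo (-R) R, HasDerivAt f (f' x) x)
    (hsmooth : ∀ x ∈ Set.Ioo (-R) R, ∀ y ∈ Set.Ioo (-R) R, |f' x - f' y| ≤ M₂ * |x - y|)
    (γ : ℝ) (hγ0 : 0 < γ) (hγ1 : γ ≤ 1) :
    ∀ x ∈ Set.Ioo (-R) R, ∀ y ∈ Set.Ioo (-R) R,
      |(f (γ * x) / γ - f' 0 * x) - (f (γ * y) / γ - f' 0 * y)| ≤ γ * M₂ * R * |x - y| := by
  intro x hx y hy
  have hR : 0 < R := by linarith [hx.1, hx.2]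
  have h0 : (0 : ℝ) ∈ Ioo (-R) R := ⟨neg_lt_zero.2 hR, hR⟩
  have hg : ∀ z ∈ Ioo (-R) R, HasDerivWithinAt (fun z => f (γ * z) / γ - f' 0 * z)
      (f' (γ * z) - f' 0) (Ioo (-R) R) z := fun z hz =>
    ((hderiv _ (mul_mem_Ioo_neg h0 hz hγ0.le hγ1)).dilation_sub_linear hγ0.ne').hasDerivWithinAt
  exact (convex_Ioo (-R) R).norm_image_sub_le_of_norm_hasDerivWithin_le hg
    (fun z hz => abs_apply_mul_sub_apply_zero_le hR hsmooth hγ0.le hγ1 hz) hy hx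

/-- Let `R > 0` and `f : (-R, R) → ℝ` be differentiable with `M₂`-Lipschitz
derivative `f'`. Then for every `0 < γ ≤ 1`, the function `x ↦ f(γx)/γ - f'(0)·x` is
`(γ·M₂·R)`-Lipschitz on `(-R, R)`. -/
theorem dilation_sub_linear_lipschitz
    (R M₂ : ℝ) (hR : 0 < R) (f f' : ℝ → ℝ)
    (hderiv : ∀ x ∈ Set.Ioo (-R) R, HasDerivAt f (f' x) x)
    (hsmooth : ∀ x ∈ Set.Ioo (-R) R, ∀ y ∈ Set.Ioo (-R) R, |f' x - f' y| ≤ M₂ * |x - y|)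
    (γ : ℝ) (hγ0 : 0 < γ) (hγ1 : γ ≤ 1) :
    ∀ x ∈ Set.Ioo (-R) R, ∀ y ∈ Set.Ioo (-R) R,
      |(f (γ * x) / γ - f' 0 * x) - (f (γ * y) / γ - f' 0 * y)| ≤ γ * M₂ * R * |x - y| :=
  dilation_sub_linear_lipschitz_general R M₂ f f' hderiv hsmooth γ hγ0 hγ1
end

section
/- Let R > 0 and let f : (-R, R) → ℝ be an (M₁, M₂)-diffeomorphism. Let d ≥ 1 be an integer and let 0 < γ₀ < γ₁ < ⋯ < γ_d = 1 be scale parameters. For each 1 ≤ k ≤ d define Δ_k := f_[γ_k] ∘ f_[γ_{k−1}]⁻¹ and ψ_k(x) := Δ_k(x) − x, where f_[γ](x) := f(γx)/γ. Then ψ_k is C₁·R·(γ_k − γ_{k−1})-Lipschitz on its domain, where C₁ := 3·M₁·M₂. -/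
/-!
Write `a = γ_{k-1} < b = γ_k`. Substituting `x = f_[a](t)` turns the rung into
`ψ_k(x) = f_[b](t) - f_[a](t)`, whose derivative in `t` is `f'(bt) - f'(at)`; as `f'` is
`M₂`-Lipschitz and `|t| < R`, this is at most `M₂ (b - a) R` in absolute value. By the mean value
theorem `ψ_k` is therefore `M₂ (b - a) R`-Lipschitz in `t`, and `t = f_[a]⁻¹(x)` is `M₁`-Lipschitz
in `x`, which gives the constant `M₁ M₂ R (b - a)`.
-/

open Set

noncomputable def dilation (f : ℝ → ℝ) (c t : ℝ) : ℝ := f (c * t) / c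

theorem HasDerivAt.dilation {f : ℝ → ℝ} {d c u : ℝ} (hc : c ≠ 0) (hf : HasDerivAt f d (c * u)) :
    HasDerivAt (dilation f c) d u := by
  show HasDerivAt (fun v => f (c * v) / c) d u
  simpa [hc, Function.comp_def] using (hf.comp u ((hasDerivAt_id u).const_mul c)).div_const c

theorem mul_dilation (f : ℝ → ℝ) {c : ℝ} (hc : c ≠ 0) (t : ℝ) : c * dilation f c t = f (c * t) :=
  mul_div_cancel₀ _ hc

theorem dilation_dilation_eq_self {f g : ℝ → ℝ} {c t : ℝ} (hc : c ≠ 0)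
    (hgf : g (f (c * t)) = c * t) : dilation g c (dilation f c t) = t := by
  rw [dilation, mul_dilation f hc, hgf, mul_div_cancel_left₀ _ hc]

theorem abs_dilation_sub_dilation_le {g : ℝ → ℝ} {M c x y : ℝ} (hc : 0 < c)
    (hg : |g (c * x) - g (c * y)| ≤ M * |c * x - c * y|) :
    |dilation g c x - dilation g c y| ≤ M * |x - y| := by
  rw [dilation, dilation, div_sub_div_same, abs_div, abs_of_pos hc, div_le_iff₀ hc]
  rw [← mul_sub, abs_mul, abs_of_pos hc] at hg
  linarith

theorem mul_mem_Ioo_neg_self {R c u : ℝ} (hc : |c| ≤ 1) (hu : u ∈ Ioo (-R) R) :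
    c * u ∈ Ioo (-R) R := by
  rw [mem_Ioo, ← abs_lt, abs_mul] at *
  exact (mul_le_of_le_one_left (abs_nonneg u) hc).trans_lt hu

theorem nonneg_of_abs_sub_le_mul_abs_sub_s2 {F : ℝ → ℝ} {K x y : ℝ} (hxy : x ≠ y)
    (hF : |F x - F y| ≤ K * |x - y|) : 0 ≤ K :=
  nonneg_of_mul_nonneg_left ((abs_nonneg _).trans hF) (abs_pos.2 (sub_ne_zero.2 hxy))

section Rung

variable {R M₂ a b : ℝ} {f f' : ℝ → ℝ}

theorem abs_comp_mul_sub_comp_mul_le (hM₂ : 0 ≤ M₂) (ha : 0 ≤ a) (hab : a ≤ b) (hb : b ≤ 1)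
    (hf'_lip : ∀ x ∈ Ioo (-R) R, ∀ y ∈ Ioo (-R) R, |f' x - f' y| ≤ M₂ * |x - y|)
    {u : ℝ} (hu : u ∈ Ioo (-R) R) :
    |f' (b * u) - f' (a * u)| ≤ M₂ * (b - a) * R := by
  have hau := mul_mem_Ioo_neg_self (abs_le.2 ⟨by linarith, by linarith⟩ : |a| ≤ 1) hu
  have hbu := mul_mem_Ioo_neg_self (abs_le.2 ⟨by linarith, hb⟩ : |b| ≤ 1) hu
  have hu' : |u| ≤ R := abs_le.2 ⟨hu.1.le, hu.2.le⟩
  calc |f' (b * u) - f' (a * u)| ≤ M₂ * |b * u - a * u| := hf'_lip _ hbu _ hau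
    _ = M₂ * (b - a) * |u| := by
      rw [← sub_mul, abs_mul, abs_of_nonneg (sub_nonneg.2 hab), mul_assoc]
    _ ≤ M₂ * (b - a) * R := by gcongr

theorem abs_dilation_sub_dilation_sub_le (hM₂ : 0 ≤ M₂) (ha : 0 < a) (hab : a ≤ b) (hb : b ≤ 1)
    (hf' : ∀ x ∈ Ioo (-R) R, HasDerivAt f (f' x) x)
    (hf'_lip : ∀ x ∈ Ioo (-R) R, ∀ y ∈ Ioo (-R) R, |f' x - f' y| ≤ M₂ * |x - y|)
    {t s : ℝ} (ht : t ∈ Ioo (-R) R) (hs : s ∈ Ioo (-R) R) :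
    |(dilation f b t - dilation f a t) - (dilation f b s - dilation f a s)|
      ≤ M₂ * (b - a) * R * |t - s| := by
  have ha1 : |a| ≤ 1 := abs_le.2 ⟨by linarith, by linarith⟩
  have hb1 : |b| ≤ 1 := abs_le.2 ⟨by linarith, hb⟩
  have hderiv : ∀ u ∈ Ioo (-R) R, HasDerivWithinAt (fun v => dilation f b v - dilation f a v)
      (f' (b * u) - f' (a * u)) (Ioo (-R) R) u := fun u hu =>
    ((HasDerivAt.dilation (by linarith) (hf' _ (mul_mem_Ioo_neg_self hb1 hu))).sub
      (HasDerivAt.dilation ha.ne' (hf' _ (mul_mem_Ioo_neg_self ha1 hu)))).hasDerivWithinAt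
  simpa only [Real.norm_eq_abs] using Convex.norm_image_sub_le_of_norm_hasDerivWithin_le hderiv
    (fun u hu => abs_comp_mul_sub_comp_mul_le hM₂ ha.le hab hb hf'_lip hu) (convex_Ioo _ _) hs ht

theorem abs_rung_sub_rung_le {g : ℝ → ℝ} {M₁ : ℝ} (hM₂ : 0 ≤ M₂) (ha : 0 < a) (hab : a ≤ b)
    (hb : b ≤ 1) (hgf : ∀ x ∈ Ioo (-R) R, g (f x) = x)
    (hf' : ∀ x ∈ Ioo (-R) R, HasDerivAt f (f' x) x)
    (hf'_lip : ∀ x ∈ Ioo (-R) R, ∀ y ∈ Ioo (-R) R, |f' x - f' y| ≤ M₂ * |x - y|)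
    (hg_lip : ∀ x ∈ f '' Ioo (-R) R, ∀ y ∈ f '' Ioo (-R) R, |g x - g y| ≤ M₁ * |x - y|)
    {t s : ℝ} (ht : t ∈ Ioo (-R) R) (hs : s ∈ Ioo (-R) R) :
    |(dilation f b (dilation g a (dilation f a t)) - dilation f a t) -
        (dilation f b (dilation g a (dilation f a s)) - dilation f a s)|
      ≤ M₁ * M₂ * R * (b - a) * |dilation f a t - dilation f a s| := by
  have ha1 : |a| ≤ 1 := abs_le.2 ⟨by linarith, by linarith⟩
  have hat := mul_mem_Ioo_neg_self ha1 ht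
  have has := mul_mem_Ioo_neg_self ha1 hs
  have hinv : |t - s| ≤ M₁ * |dilation f a t - dilation f a s| := by
    have hg := hg_lip _ (mem_image_of_mem f hat) _ (mem_image_of_mem f has)
    rw [← mul_dilation f ha.ne', ← mul_dilation f ha.ne' s] at hg
    have := abs_dilation_sub_dilation_le ha hg
    rwa [dilation_dilation_eq_self ha.ne' (hgf _ hat),
      dilation_dilation_eq_self ha.ne' (hgf _ has)] at this
  have hR : 0 ≤ R := by linarith [ht.1, ht.2]
  rw [dilation_dilation_eq_self ha.ne' (hgf _ hat),
    dilation_dilation_eq_self ha.ne' (hgf _ has)]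
  calc _ ≤ M₂ * (b - a) * R * |t - s| :=
        abs_dilation_sub_dilation_sub_le hM₂ ha hab hb hf' hf'_lip ht hs
    _ ≤ M₂ * (b - a) * R * (M₁ * |dilation f a t - dilation f a s|) :=
        mul_le_mul_of_nonneg_left hinv (mul_nonneg (mul_nonneg hM₂ (sub_nonneg.2 hab)) hR)
    _ = _ := by ring

end Rung

theorem ladder_rung_lipschitz_general
    (R M₁ M₂ : ℝ) (hR : 0 < R) (d : ℕ)
    (γ : ℕ → ℝ) (hγ0 : 0 < γ 0) (hγmono : ∀ i, i < d → γ i < γ (i + 1)) (hγd : γ d = 1)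
    (f g f' : ℝ → ℝ)
    (hgf : ∀ x ∈ Set.Ioo (-R) R, g (f x) = x)
    (hf' : ∀ x ∈ Set.Ioo (-R) R, HasDerivAt f (f' x) x)
    (hf'_lip : ∀ x ∈ Set.Ioo (-R) R, ∀ y ∈ Set.Ioo (-R) R, |f' x - f' y| ≤ M₂ * |x - y|)
    (hg_lip : ∀ x ∈ f '' Set.Ioo (-R) R, ∀ y ∈ f '' Set.Ioo (-R) R, |g x - g y| ≤ M₁ * |x - y|)
    (k : ℕ) (hk1 : 1 ≤ k) (hkd : k ≤ d) :
    ∀ x ∈ (fun t => f (γ (k - 1) * t) / γ (k - 1)) '' Set.Ioo (-R) R,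
    ∀ y ∈ (fun t => f (γ (k - 1) * t) / γ (k - 1)) '' Set.Ioo (-R) R,
      |(f (γ k * (g (γ (k - 1) * x) / γ (k - 1))) / γ k - x) -
          (f (γ k * (g (γ (k - 1) * y) / γ (k - 1))) / γ k - y)|
        ≤ 3 * M₁ * M₂ * R * (γ k - γ (k - 1)) * |x - y| := by
  have hγ : StrictMonoOn γ (Iic d) := strictMonoOn_Iic_of_lt_succ hγmono
  have ha : 0 < γ (k - 1) :=
    hγ0.trans_le (hγ.monotoneOn (mem_Iic.2 (Nat.zero_le d)) (mem_Iic.2 (by omega)) (Nat.zero_le _))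
  have hab : γ (k - 1) < γ k := by simpa [Nat.sub_add_cancel hk1] using hγmono (k - 1) (by omega)
  have hb : γ k ≤ 1 := hγd ▸ hγ.monotoneOn (mem_Iic.2 hkd) (mem_Iic.2 le_rfl) hkd
  have hM₂ : 0 ≤ M₂ := nonneg_of_abs_sub_le_mul_abs_sub_s2 (half_pos hR).ne'
    (hf'_lip _ ⟨by linarith, by linarith⟩ 0 ⟨by linarith, hR⟩)
  rintro _ ⟨t, ht, rfl⟩ _ ⟨s, hs, rfl⟩
  have h := abs_rung_sub_rung_le hM₂ ha hab.le hb hgf hf' hf'_lip hg_lip ht hs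
  have h3 := h.trans (le_mul_of_one_le_left ((abs_nonneg _).trans h) (by norm_num : (1 : ℝ) ≤ 3))
  simp only [mul_assoc] at h3 ⊢
  exact h3

/-- Let `f : (-R, R) → ℝ` be an `(M₁, M₂)`-diffeomorphism (with inverse `g`,
first/second derivatives `f', f''` and `g', g''`), let `0 < γ₀ < γ₁ < ⋯ < γ_d = 1`.
For `1 ≤ k ≤ d` the rung `ψ_k(x) = f_[γ_k](f_[γ_{k-1}]⁻¹(x)) - x` of the ladder decomposition
is `C₁·R·(γ_k - γ_{k-1})`-Lipschitz on its domain (the range of `f_[γ_{k-1}]`), where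
`C₁ = 3·M₁·M₂`. -/
theorem ladder_rung_lipschitz
    (R M₁ M₂ : ℝ) (hR : 0 < R) (d : ℕ) (hd : 1 ≤ d)
    (γ : ℕ → ℝ) (hγ0 : 0 < γ 0) (hγmono : ∀ i, i < d → γ i < γ (i + 1)) (hγd : γ d = 1)
    (f g f' g' f'' g'' : ℝ → ℝ)
    (hgf : ∀ x ∈ Set.Ioo (-R) R, g (f x) = x)
    (hf_lip : ∀ x ∈ Set.Ioo (-R) R, ∀ y ∈ Set.Ioo (-R) R, |f x - f y| ≤ M₁ * |x - y|)
    (hf' : ∀ x ∈ Set.Ioo (-R) R, HasDerivAt f (f' x) x)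
    (hf'' : ∀ x ∈ Set.Ioo (-R) R, HasDerivAt f' (f'' x) x)
    (hf'_lip : ∀ x ∈ Set.Ioo (-R) R, ∀ y ∈ Set.Ioo (-R) R, |f' x - f' y| ≤ M₂ * |x - y|)
    (hg_lip : ∀ x ∈ f '' Set.Ioo (-R) R, ∀ y ∈ f '' Set.Ioo (-R) R, |g x - g y| ≤ M₁ * |x - y|)
    (hg' : ∀ x ∈ f '' Set.Ioo (-R) R, HasDerivAt g (g' x) x)
    (hg'' : ∀ x ∈ f '' Set.Ioo (-R) R, HasDerivAt g' (g'' x) x)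
    (hg'_lip : ∀ x ∈ f '' Set.Ioo (-R) R, ∀ y ∈ f '' Set.Ioo (-R) R,
      |g' x - g' y| ≤ M₂ * |x - y|)
    (k : ℕ) (hk1 : 1 ≤ k) (hkd : k ≤ d) :
    ∀ x ∈ (fun t => f (γ (k - 1) * t) / γ (k - 1)) '' Set.Ioo (-R) R,
    ∀ y ∈ (fun t => f (γ (k - 1) * t) / γ (k - 1)) '' Set.Ioo (-R) R,
      |(f (γ k * (g (γ (k - 1) * x) / γ (k - 1))) / γ k - x) -
          (f (γ k * (g (γ (k - 1) * y) / γ (k - 1))) / γ k - y)|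
        ≤ 3 * M₁ * M₂ * R * (γ k - γ (k - 1)) * |x - y| :=
  ladder_rung_lipschitz_general R M₁ M₂ hR d γ hγ0 hγmono hγd f g f' hgf hf' hf'_lip hg_lip k hk1
    hkd
end

section
/- Let f(x) = tanh(x), so f⁻¹(x) = (1/2)·ln((1+x)/(1−x)). Let d ≥ 1 and γ_k := 2^{k−d} for 0 ≤ k ≤ d. For each 1 ≤ k ≤ d define Δ_k := f_[γ_k] ∘ f_[γ_{k−1}]⁻¹ and ψ_k(x) := Δ_k(x) − x, where f_[γ](x) := f(γx)/γ. Then for all x with |x| < 2^{d−k+1} (so that γ_{k−1}|x| < 1), ψ_k(x) = −γ_{k−1}²·x³ / (1 + γ_{k−1}²·x²). -/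
/-- For `f = tanh`, `f⁻¹(x) = (1/2)·ln((1+x)/(1-x))` and `γ_k = 2^(k-d)`,
the ladder rung `ψ_k(x) = f_[γ_k](f_[γ_{k-1}]⁻¹(x)) - x` has the closed form
`ψ_k(x) = -γ_{k-1}²·x³ / (1 + γ_{k-1}²·x²)` for all `|x| < 2^(d-k+1)`. -/
theorem tanh_ladder_rung_closed_form
    (d : ℕ) (hd : 1 ≤ d) (k : ℕ) (hk1 : 1 ≤ k) (hkd : k ≤ d)
    (γ : ℕ → ℝ) (hγ : ∀ j, γ j = (2 : ℝ) ^ ((j : ℤ) - (d : ℤ)))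
    (x : ℝ) (hx : |x| < (2 : ℝ) ^ ((d : ℤ) - (k : ℤ) + 1)) :
    Real.tanh (γ k * ((1 / (2 * γ (k - 1))) *
        Real.log ((1 + γ (k - 1) * x) / (1 - γ (k - 1) * x)))) / γ k - x
      = -((γ (k - 1)) ^ 2 * x ^ 3) / (1 + (γ (k - 1)) ^ 2 * x ^ 2) := by
  set g := γ (k - 1) with hgdef
  have hg : g = (2 : ℝ) ^ (((k : ℤ) - 1) - (d : ℤ)) := by
    rw [hgdef, hγ]
    congr 1
    push_cast [Nat.cast_sub hk1]
    ring
  have hgpos : 0 < g := by rw [hg]; positivity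
  have hγk : γ k = 2 * g := by
    rw [hγ, hg, ← zpow_one_add₀ (two_ne_zero)]
    congr 1
    ring
  -- |g * x| < 1
  have hgx : |g * x| < 1 := by
    have : g * |x| < g * (2 : ℝ) ^ ((d : ℤ) - (k : ℤ) + 1) :=
      mul_lt_mul_of_pos_left hx hgpos
    have h2 : g * (2 : ℝ) ^ ((d : ℤ) - (k : ℤ) + 1) = 1 := by
      rw [hg, ← zpow_add₀ (two_ne_zero : (2:ℝ) ≠ 0),
        show ((k:ℤ) - 1 - (d:ℤ)) + ((d:ℤ) - (k:ℤ) + 1) = 0 by ring, zpow_zero]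
    calc |g * x| = g * |x| := by rw [abs_mul, abs_of_pos hgpos]
      _ < 1 := by rw [← h2]; exact this
  have h1 : 0 < 1 + g * x := by
    have := neg_lt_of_abs_lt hgx; linarith
  have h2 : 0 < 1 - g * x := by
    have := lt_of_abs_lt hgx; linarith
  set u : ℝ := (1 + g * x) / (1 - g * x) with hu
  have hupos : 0 < u := div_pos h1 h2
  have harg : γ k * ((1 / (2 * g)) * Real.log u) = Real.log u := by
    rw [hγk]; field_simp
  rw [harg, Real.tanh_eq_sinh_div_cosh, Real.sinh_eq, Real.cosh_eq, Real.exp_log hupos,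
    Real.exp_neg, Real.exp_log hupos, hγk, hu]
  have hden : 0 < 1 + g ^ 2 * x ^ 2 := by positivity
  have h1p : (1 + g * x) ≠ 0 := h1.ne'
  have h2p : (1 - g * x) ≠ 0 := h2.ne'
  rw [inv_div]
  rw [div_sub_div _ _ h2p h1p, div_add_div _ _ h2p h1p, div_div_div_cancel_right₀]
  have hq : (1 + g * x) * (1 + g * x) + (1 - g * x) * (1 - g * x) ≠ 0 := by nlinarith
  field_simp
  ring
  exact two_ne_zero
end

section
/- Let A be a finite set, let P, Q, R be probability mass functions on A with P absolutely continuous with respect to Q and with respect to R, and let λ ∈ (0, 1). Then λ·D(P‖Q) + (1−λ)·D(P‖R) = D(P‖(Q,R)^λ) + (1−λ)·D_λ(Q‖R), where (Q,R)^λ is the tilted distribution (Q,R)^λ(a) := Q^λ(a)·R^{1−λ}(a) / Σ_{x∈A} Q^λ(x)·R^{1−λ}(x) and D_λ is the Rényi divergence of order λ. -/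
/-- **Entropy Combination.** For pmfs `P, Q, R` on a finite set `A` with
`P ≪ Q`, `P ≪ R` and `λ ∈ (0,1)`,
`λ·D(P‖Q) + (1-λ)·D(P‖R) = D(P‖(Q,R)^λ) + (1-λ)·D_λ(Q‖R)`,
where `(Q,R)^λ(a) = Q(a)^λ R(a)^{1-λ} / Σ_x Q(x)^λ R(x)^{1-λ}` is the tilted distribution and
`D_λ(Q‖R) = (1/(λ-1))·log Σ_a Q(a)^λ R(a)^{1-λ}` is the Rényi divergence of order `λ`. -/
theorem entropy_combination
    {A : Type*} [Fintype A]
    (P Q R : A → ℝ) (lam : ℝ) (hlam : lam ∈ Set.Ioo (0 : ℝ) 1)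
    (hP0 : ∀ a, 0 ≤ P a) (hQ0 : ∀ a, 0 ≤ Q a) (hR0 : ∀ a, 0 ≤ R a)
    (hP1 : ∑ a, P a = 1) (hQ1 : ∑ a, Q a = 1) (hR1 : ∑ a, R a = 1)
    (hPQ : ∀ a, Q a = 0 → P a = 0) (hPR : ∀ a, R a = 0 → P a = 0) :
    lam * (∑ a, P a * Real.log (P a / Q a)) + (1 - lam) * (∑ a, P a * Real.log (P a / R a))
      = (∑ a, P a * Real.log (P a /
            (Q a ^ lam * R a ^ (1 - lam) / ∑ x, Q x ^ lam * R x ^ (1 - lam))))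
        + (1 - lam) * ((1 / (lam - 1)) * Real.log (∑ a, Q a ^ lam * R a ^ (1 - lam))) := by
  obtain ⟨hl0, hl1⟩ := hlam
  set Z := ∑ x, Q x ^ lam * R x ^ (1 - lam) with hZdef
  have hZ0 : 0 < Z := by
    have hex : ∃ a, 0 < P a := by
      by_contra h
      push_neg at h
      have hz : ∀ a, P a = 0 := fun a => le_antisymm (h a) (hP0 a)
      simp [hz] at hP1
    obtain ⟨a, ha⟩ := hex
    have hQa : 0 < Q a := (hQ0 a).lt_of_ne fun h => by have := hPQ a h.symm; linarith
    have hRa : 0 < R a := (hR0 a).lt_of_ne fun h => by have := hPR a h.symm; linarith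
    have hpos : 0 < Q a ^ lam * R a ^ (1 - lam) :=
      mul_pos (Real.rpow_pos_of_pos hQa _) (Real.rpow_pos_of_pos hRa _)
    exact lt_of_lt_of_le hpos (Finset.single_le_sum
      (fun x _ => mul_nonneg (Real.rpow_nonneg (hQ0 x) _) (Real.rpow_nonneg (hR0 x) _))
      (Finset.mem_univ a))
  have key : ∀ a, lam * (P a * Real.log (P a / Q a)) + (1 - lam) * (P a * Real.log (P a / R a))
      = P a * Real.log (P a / (Q a ^ lam * R a ^ (1 - lam) / Z)) - P a * Real.log Z := by
    intro a
    rcases eq_or_lt_of_le (hP0 a) with h | h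
    · simp [← h]
    · have hQa : 0 < Q a := (hQ0 a).lt_of_ne fun he => by have := hPQ a he.symm; linarith
      have hRa : 0 < R a := (hR0 a).lt_of_ne fun he => by have := hPR a he.symm; linarith
      have ht : 0 < Q a ^ lam * R a ^ (1 - lam) :=
        mul_pos (Real.rpow_pos_of_pos hQa _) (Real.rpow_pos_of_pos hRa _)
      rw [Real.log_div h.ne' (div_pos ht hZ0).ne', Real.log_div ht.ne' hZ0.ne',
        Real.log_mul (Real.rpow_pos_of_pos hQa _).ne' (Real.rpow_pos_of_pos hRa _).ne',
        Real.log_rpow hQa, Real.log_rpow hRa,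
        Real.log_div h.ne' hQa.ne', Real.log_div h.ne' hRa.ne']
      ring
  have hsum : lam * (∑ a, P a * Real.log (P a / Q a))
      + (1 - lam) * (∑ a, P a * Real.log (P a / R a))
      = ∑ a, (P a * Real.log (P a / (Q a ^ lam * R a ^ (1 - lam) / Z)) - P a * Real.log Z) := by
    rw [Finset.mul_sum, Finset.mul_sum, ← Finset.sum_add_distrib]
    exact Finset.sum_congr rfl fun a _ => key a
  rw [hsum, Finset.sum_sub_distrib, ← Finset.sum_mul, hP1, one_mul]
  have hne : lam - 1 ≠ 0 := sub_ne_zero.mpr hl1.ne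
  have : (1 - lam) * ((1 / (lam - 1)) * Real.log Z) = -Real.log Z := by
    field_simp
    linarith [mul_comm lam (Real.log Z)]
  rw [this]
  ring
end

section
/- Let A and B be finite sets and let (A, B) be a pair of random variables on A × B with joint law P_{AB}, marginals P_A and P_B. Let (Ā, B̄) ∼ P_A ⊗ P_B be independent copies of the marginals. Let g : A × B → ℝ be such that g(Ā, B̄) is σ-subgaussian, i.e., log E[exp(t·(g(Ā,B̄) − E[g(Ā,B̄)]))] ≤ t²σ²/2 for all t ∈ ℝ. Then for every λ > 0, E[g(Ā, B̄)] − E[g(A, B)] ≤ λ·(log|A| − H(A|B)) + σ²/(2λ), where H(A|B) is the conditional Shannon entropy of A given B. -/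
/-!
Donsker–Varadhan bounds `E_P[F]` by `KL(P ‖ Q) + log E_Q[exp F]`. Applied with `P = P_{AB}`,
`Q = P_A ⊗ P_B` and `F = (E_Q g - g) / λ`, the subgaussian bound on the log-moment generating
function turns this into `E_Q g - E_P g ≤ λ · KL(P ‖ Q) + σ² / (2λ)`. Finally
`KL(P_{AB} ‖ P_A ⊗ P_B) = H(A) - H(A|B) ≤ log |A| - H(A|B)`.
-/

open Finset Real

section WeightVectors

variable {ι : Type*} [Fintype ι]

/-- Kullback–Leibler divergence of two weight vectors (`0 * log (0 / q) = 0` handles `p i = 0`). -/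
noncomputable def discreteKL (p q : ι → ℝ) : ℝ := ∑ i, p i * log (p i / q i)

lemma mul_log_div_le_sub {x y : ℝ} (hx : 0 ≤ x) (hy : 0 ≤ y) (hxy : 0 < x → 0 < y) :
    x * log (y / x) ≤ y - x := by
  rcases hx.eq_or_lt with rfl | hx
  · simpa using hy
  · calc x * log (y / x) ≤ x * (y / x - 1) :=
          mul_le_mul_of_nonneg_left (log_le_sub_one_of_pos (div_pos (hxy hx) hx)) hx.le
      _ = y - x := by field_simp

theorem sum_mul_log_div_le_sum_sub_sum (p r : ι → ℝ) (hp0 : ∀ i, 0 ≤ p i) (hr0 : ∀ i, 0 ≤ r i)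
    (hpr : ∀ i, 0 < p i → 0 < r i) :
    ∑ i, p i * log (r i / p i) ≤ ∑ i, r i - ∑ i, p i := by
  rw [← sum_sub_distrib]
  exact sum_le_sum fun i _ => mul_log_div_le_sub (hp0 i) (hr0 i) (hpr i)

theorem neg_sum_mul_log_le_log_card [Nonempty ι] (w : ι → ℝ) (hw0 : ∀ i, 0 ≤ w i)
    (hw1 : ∑ i, w i = 1) :
    -∑ i, w i * log (w i) ≤ log (Fintype.card ι) := by
  have hn : (0 : ℝ) < Fintype.card ι := by exact_mod_cast Fintype.card_pos
  have hgibbs := sum_mul_log_div_le_sum_sub_sum w (fun _ => (Fintype.card ι : ℝ)⁻¹) hw0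
    (fun _ => by positivity) (fun _ _ => by positivity)
  have hterm : ∀ i, w i * log ((Fintype.card ι : ℝ)⁻¹ / w i)
      = -(w i * log (Fintype.card ι)) - w i * log (w i) := by
    intro i
    rcases (hw0 i).eq_or_lt with h0 | h0
    · simp [← h0]
    · rw [log_div (by positivity) h0.ne', log_inv]
      ring
  simp only [hterm, sum_sub_distrib, sum_neg_distrib, ← sum_mul, hw1, sum_const, card_univ,
    nsmul_eq_mul] at hgibbs
  field_simp at hgibbs
  linarith

/-- **Donsker–Varadhan** variational inequality for weight vectors. -/
theorem sum_mul_le_discreteKL_add_log_sum_mul_exp (p q F : ι → ℝ) (hp0 : ∀ i, 0 ≤ p i)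
    (hp1 : ∑ i, p i = 1) (hq0 : ∀ i, 0 ≤ q i) (hpq : ∀ i, 0 < p i → 0 < q i) :
    ∑ i, p i * F i ≤ discreteKL p q + log (∑ i, q i * exp (F i)) := by
  set Z := ∑ i, q i * exp (F i)
  have hZ : 0 < Z := by
    obtain ⟨i, -, hi⟩ := exists_lt_of_sum_lt (s := univ) (f := 0) (g := p) (by simp [hp1])
    exact sum_pos' (fun j _ => by have := hq0 j; positivity)
      ⟨i, mem_univ i, mul_pos (hpq i hi) (exp_pos _)⟩
  -- Gibbs' inequality against the Gibbs measure `r ∝ q · exp F`.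
  have hgibbs := sum_mul_log_div_le_sum_sub_sum p (fun i => q i * exp (F i) / Z) hp0
    (fun i => by have := hq0 i; positivity) (fun i hi => by have := hpq i hi; positivity)
  have hterm : ∀ i, p i * log (q i * exp (F i) / Z / p i)
      = p i * F i - p i * log (p i / q i) - p i * log Z := by
    intro i
    rcases (hp0 i).eq_or_lt with h0 | h0
    · simp [← h0]
    · have hqi := hpq i h0
      rw [log_div (by positivity) h0.ne', log_div (by positivity) hZ.ne',
        log_mul hqi.ne' (exp_ne_zero _), log_exp, log_div h0.ne' hqi.ne']
      ring
  have hr1 : ∑ i, q i * exp (F i) / Z = 1 := by rw [← sum_div, div_self hZ.ne']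
  simp only [hterm, sum_sub_distrib, ← sum_mul, hp1, hr1] at hgibbs
  rw [discreteKL]
  linarith

theorem sum_mul_sub_sum_mul_le_of_subgaussian (p q f : ι → ℝ) (hp0 : ∀ i, 0 ≤ p i)
    (hp1 : ∑ i, p i = 1) (hq0 : ∀ i, 0 ≤ q i) (hpq : ∀ i, 0 < p i → 0 < q i) (σ : ℝ)
    (hsub : ∀ t : ℝ, log (∑ i, q i * exp (t * (f i - ∑ j, q j * f j))) ≤ t ^ 2 * σ ^ 2 / 2)
    {lam : ℝ} (hlam : 0 < lam) :
    ∑ i, q i * f i - ∑ i, p i * f i ≤ lam * discreteKL p q + σ ^ 2 / (2 * lam) := by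
  set μ := ∑ i, q i * f i
  have hdv := sum_mul_le_discreteKL_add_log_sum_mul_exp p q (fun i => -lam⁻¹ * (f i - μ))
    hp0 hp1 hq0 hpq
  have hmean : ∑ i, p i * (-lam⁻¹ * (f i - μ)) = (μ - ∑ i, p i * f i) / lam := by
    have hterm : ∀ i, p i * (-lam⁻¹ * (f i - μ)) = lam⁻¹ * μ * p i - lam⁻¹ * (p i * f i) :=
      fun i => by ring
    simp only [hterm, sum_sub_distrib, ← mul_sum, hp1]
    field_simp
  have hmgf := hsub (-lam⁻¹)
  rw [hmean] at hdv
  have hscaled := mul_le_mul_of_nonneg_left (hdv.trans (add_le_add le_rfl hmgf)) hlam.le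
  rw [mul_div_cancel₀ _ hlam.ne'] at hscaled
  calc _ ≤ lam * (discreteKL p q + (-lam⁻¹) ^ 2 * σ ^ 2 / 2) := hscaled
    _ = lam * discreteKL p q + σ ^ 2 / (2 * lam) := by field_simp

end WeightVectors

section Marginals

variable {α β : Type*}

noncomputable def marginalFst [Fintype β] (p : α × β → ℝ) (a : α) : ℝ := ∑ b, p (a, b)

noncomputable def marginalSnd [Fintype α] (p : α × β → ℝ) (b : β) : ℝ := ∑ a, p (a, b)

noncomputable def condEntropy [Fintype α] [Fintype β] (p : α × β → ℝ) : ℝ :=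
  -∑ a, ∑ b, p (a, b) * log (p (a, b) / marginalSnd p b)

variable {p : α × β → ℝ}

lemma le_marginalFst [Fintype β] (hp0 : ∀ ab, 0 ≤ p ab) (a : α) (b : β) :
    p (a, b) ≤ marginalFst p a :=
  single_le_sum (fun b' _ => hp0 (a, b')) (mem_univ b)

lemma le_marginalSnd [Fintype α] (hp0 : ∀ ab, 0 ≤ p ab) (a : α) (b : β) :
    p (a, b) ≤ marginalSnd p b :=
  single_le_sum (fun a' _ => hp0 (a', b)) (mem_univ a)

lemma marginalFst_nonneg [Fintype β] (hp0 : ∀ ab, 0 ≤ p ab) (a : α) : 0 ≤ marginalFst p a :=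
  sum_nonneg fun b _ => hp0 (a, b)

lemma marginalSnd_nonneg [Fintype α] (hp0 : ∀ ab, 0 ≤ p ab) (b : β) : 0 ≤ marginalSnd p b :=
  sum_nonneg fun a _ => hp0 (a, b)

lemma sum_marginalFst [Fintype α] [Fintype β] : ∑ a, marginalFst p a = ∑ ab, p ab :=
  (Fintype.sum_prod_type p).symm

lemma marginalFst_mul_marginalSnd_pos [Fintype α] [Fintype β] (hp0 : ∀ ab, 0 ≤ p ab)
    {a : α} {b : β} (h : 0 < p (a, b)) : 0 < marginalFst p a * marginalSnd p b :=
  mul_pos (h.trans_le (le_marginalFst hp0 a b)) (h.trans_le (le_marginalSnd hp0 a b))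

/-- Mutual information is `H(A) - H(A|B)`. -/
theorem discreteKL_marginals_eq [Fintype α] [Fintype β] (hp0 : ∀ ab, 0 ≤ p ab) :
    discreteKL p (fun ab => marginalFst p ab.1 * marginalSnd p ab.2)
      = -condEntropy p - ∑ a, marginalFst p a * log (marginalFst p a) := by
  have hterm : ∀ a b, p (a, b) * log (p (a, b) / (marginalFst p a * marginalSnd p b))
      = p (a, b) * log (p (a, b) / marginalSnd p b) - p (a, b) * log (marginalFst p a) := by
    intro a b
    rcases (hp0 (a, b)).eq_or_lt with h0 | h0
    · simp [← h0]
    · have hA := h0.trans_le (le_marginalFst hp0 a b)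
      have hB := h0.trans_le (le_marginalSnd hp0 a b)
      rw [log_div h0.ne' (by positivity), log_div h0.ne' hB.ne', log_mul hA.ne' hB.ne']
      ring
  simp only [discreteKL, condEntropy, Fintype.sum_prod_type, hterm, sum_sub_distrib, ← sum_mul,
    neg_neg]
  rfl

theorem discreteKL_marginals_le [Fintype α] [Fintype β] [Nonempty α] (hp0 : ∀ ab, 0 ≤ p ab)
    (hp1 : ∑ ab, p ab = 1) :
    discreteKL p (fun ab => marginalFst p ab.1 * marginalSnd p ab.2)
      ≤ log (Fintype.card α) - condEntropy p := by
  rw [discreteKL_marginals_eq hp0]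
  linarith [neg_sum_mul_log_le_log_card _ (marginalFst_nonneg hp0) (sum_marginalFst.trans hp1)]

end Marginals

/-- **decoupling for subgaussian functions.** Let `(A, B)` have joint pmf `p` on a
finite product `A × B`, with marginals `p_A(a) = Σ_b p(a,b)` and `p_B(b) = Σ_a p(a,b)`, and let
`(Ā, B̄) ~ p_A ⊗ p_B`. If `g(Ā, B̄)` is `σ`-subgaussian, then for every `λ > 0`,
`E[g(Ā,B̄)] - E[g(A,B)] ≤ λ·(log|A| - H(A|B)) + σ²/(2λ)`, where
`H(A|B) = -Σ_{a,b} p(a,b)·log(p(a,b)/p_B(b))` is conditional Shannon entropy. -/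
theorem subgaussian_decoupling_bound
    {A B : Type*} [Fintype A] [Fintype B] [Nonempty A]
    (p : A × B → ℝ) (hp0 : ∀ ab, 0 ≤ p ab) (hp1 : ∑ ab, p ab = 1)
    (g : A × B → ℝ) (σ : ℝ)
    (hsub : ∀ t : ℝ,
      Real.log (∑ a, ∑ b, (∑ b', p (a, b')) * (∑ a', p (a', b)) *
          Real.exp (t * (g (a, b) -
            ∑ a', ∑ b', (∑ b'', p (a', b'')) * (∑ a'', p (a'', b')) * g (a', b'))))
        ≤ t ^ 2 * σ ^ 2 / 2)
    (lam : ℝ) (hlam : 0 < lam) :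
    (∑ a, ∑ b, (∑ b', p (a, b')) * (∑ a', p (a', b)) * g (a, b)) - (∑ ab, p ab * g ab)
      ≤ lam * (Real.log (Fintype.card A)
            - (-∑ a, ∑ b, p (a, b) * Real.log (p (a, b) / ∑ a', p (a', b))))
        + σ ^ 2 / (2 * lam) := by
  have hdecouple := sum_mul_sub_sum_mul_le_of_subgaussian p
    (fun ab => marginalFst p ab.1 * marginalSnd p ab.2) g hp0 hp1
    (fun ab => mul_nonneg (marginalFst_nonneg hp0 _) (marginalSnd_nonneg hp0 _))
    (fun _ h => marginalFst_mul_marginalSnd_pos hp0 h) σ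
    (fun t => by simp only [Fintype.sum_prod_type]; exact hsub t) hlam
  rw [Fintype.sum_prod_type] at hdecouple
  calc _ ≤ _ := hdecouple
    _ ≤ lam * (log (Fintype.card A) - condEntropy p) + σ ^ 2 / (2 * lam) := by
      gcongr
      exact discreteKL_marginals_le hp0 hp1
end

section
/- Let d ≥ 1 and let W₁, …, W_d be nonempty finite sets. For each 1 ≤ k ≤ d let ℓ_k : W₁ × ⋯ × W_k → ℝ be a function, and let λ₁ ≥ λ₂ ≥ ⋯ ≥ λ_d > 0 with λ_{d+1} := 0. Define the conditional Gibbs measures P*(w_k | w₁^{k−1}) := exp(−ℓ_k(w₁^k)/λ_k) / Σ_{w_k'∈W_k} exp(−ℓ_k(w₁^{k−1}w_k')/λ_k), and let P*_W := P*_{W₁}·P*_{W₂|W₁}⋯P*_{W_d|W₁^{d−1}} on W₁ × ⋯ × W_d. Define ℓ̄_k(w₁^{k−1}) := −λ_k·log( (1/|W_k|)·Σ_{w_k'∈W_k} exp(−ℓ_k(w₁^{k−1}w_k')/λ_k) ) and ℓ^{(λ)}(w) := Σ_{k=1}^d (ℓ_k(w₁^k) − ℓ̄_k(w₁^{k−1})).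 Then P*_W attains the minimum, over all probability mass functions P_W on W₁ × ⋯ × W_d, of the functional E_{P_W}[ℓ^{(λ)}(W)] − Σ_{k=1}^d (λ_k − λ_{k+1})·H(W₁^k), where H(W₁^k) is the Shannon entropy of the first k coordinates (W₁, …, W_k) under P_W. -/
set_option linter.unusedSectionVars false
set_option linter.unusedVariables false

open Finset

namespace SSG

variable {d : ℕ} {W : Fin d → Type*} [∀ k, Fintype (W k)] [∀ k, Nonempty (W k)]
  [∀ k, DecidableEq (W k)]

/-- Cylinder: points agreeing with `w` on the first `n` coordinates. -/
def Cyl (n : ℕ) (w : (i : Fin d) → W i) : Finset ((i : Fin d) → W i) :=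
  univ.filter (fun w' => ∀ i : Fin d, (i : ℕ) < n → w' i = w i)

lemma mem_Cyl {n : ℕ} {w w' : (i : Fin d) → W i} :
    w' ∈ Cyl n w ↔ ∀ i : Fin d, (i : ℕ) < n → w' i = w i := by
  simp [Cyl]

lemma self_mem_Cyl {n : ℕ} {w : (i : Fin d) → W i} : w ∈ Cyl n w :=
  mem_Cyl.2 fun _ _ => rfl

lemma Cyl_zero (w : (i : Fin d) → W i) : Cyl 0 w = univ := by
  ext u; simp [mem_Cyl]

lemma Cyl_congr {n : ℕ} {w w' : (i : Fin d) → W i} (h : w' ∈ Cyl n w) :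
    Cyl n w' = Cyl n w := by
  rw [mem_Cyl] at h
  ext u; simp only [mem_Cyl]
  exact ⟨fun hu i hi => (hu i hi).trans (h i hi),
    fun hu i hi => (hu i hi).trans (h i hi).symm⟩

lemma Cyl_anti {n m : ℕ} (hnm : n ≤ m) (w : (i : Fin d) → W i) : Cyl m w ⊆ Cyl n w :=
  fun u hu => mem_Cyl.2 fun i hi => mem_Cyl.1 hu i (hi.trans_le hnm)

lemma Cyl_of_ge {n : ℕ} (hn : d ≤ n) (w : (i : Fin d) → W i) : Cyl n w = {w} := by
  ext u
  simp only [mem_Cyl, Finset.mem_singleton]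
  constructor
  · intro h; funext i; exact h i (i.2.trans_le hn)
  · rintro rfl; exact fun _ _ => rfl

lemma sum_Cyl_succ {n : ℕ} (hn : n < d) (f : ((i : Fin d) → W i) → ℝ)
    (w : (i : Fin d) → W i) :
    ∑ w' ∈ Cyl n w, f w' =
      ∑ v : W ⟨n, hn⟩, ∑ w' ∈ Cyl (n + 1) (Function.update w ⟨n, hn⟩ v), f w' := by
  rw [← Finset.sum_fiberwise_of_maps_to (g := fun w' => w' ⟨n, hn⟩)
      (fun x _ => Finset.mem_univ _) f]
  refine Finset.sum_congr rfl fun v _ => ?_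
  congr 1
  ext u
  simp only [Finset.mem_filter, mem_Cyl]
  constructor
  · rintro ⟨h1, h2⟩ i hi
    rcases Nat.lt_succ_iff_lt_or_eq.1 hi with h | h
    · rw [Function.update_of_ne (Fin.ne_of_val_ne (by simp; omega))]
      exact h1 i h
    · have : i = ⟨n, hn⟩ := Fin.ext h
      subst this
      rw [Function.update_self]
      exact h2
  · intro h
    constructor
    · intro i hi
      have := h i (by omega)
      rwa [Function.update_of_ne (Fin.ne_of_val_ne (by simp; omega))] at this
    · have := h ⟨n, hn⟩ (by simp)
      rwa [Function.update_self] at this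

/-- Marginal (cylinder mass). -/
def marg (P : ((i : Fin d) → W i) → ℝ) (n : ℕ) (w : (i : Fin d) → W i) : ℝ :=
  ∑ w' ∈ Cyl n w, P w'

variable {P : ((i : Fin d) → W i) → ℝ}

lemma marg_zero (hP1 : ∑ w, P w = 1) (w : (i : Fin d) → W i) : marg P 0 w = 1 := by
  rw [marg, Cyl_zero]; exact hP1

lemma marg_congr {n : ℕ} {w w' : (i : Fin d) → W i} (h : w' ∈ Cyl n w) :
    marg P n w' = marg P n w := by
  rw [marg, marg, Cyl_congr h]

lemma marg_nonneg (hP0 : ∀ w, 0 ≤ P w) (n : ℕ) (w : (i : Fin d) → W i) :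
    0 ≤ marg P n w :=
  Finset.sum_nonneg fun _ _ => hP0 _

lemma marg_succ_le (hP0 : ∀ w, 0 ≤ P w) (n : ℕ) (w : (i : Fin d) → W i) :
    marg P (n + 1) w ≤ marg P n w :=
  Finset.sum_le_sum_of_subset_of_nonneg (Cyl_anti (Nat.le_succ n) w)
    (fun u _ _ => hP0 u)

lemma le_marg (hP0 : ∀ w, 0 ≤ P w) (n : ℕ) (w : (i : Fin d) → W i) :
    P w ≤ marg P n w :=
  Finset.single_le_sum (f := P) (fun u _ => hP0 u) self_mem_Cyl

lemma marg_rec {n : ℕ} (hn : n < d) (w : (i : Fin d) → W i) :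
    marg P n w = ∑ v : W ⟨n, hn⟩, marg P (n + 1) (Function.update w ⟨n, hn⟩ v) :=
  sum_Cyl_succ hn P w

/-- Real-valued number of points in a level-`n` cylinder. -/
def cylCard (W : Fin d → Type*) [∀ k, Fintype (W k)] (n : ℕ) : ℝ :=
  ∏ k ∈ univ.filter (fun k : Fin d => n ≤ (k : ℕ)), (Fintype.card (W k) : ℝ)

lemma cylCard_pos (n : ℕ) : 0 < cylCard W n :=
  Finset.prod_pos fun k _ => by exact_mod_cast Fintype.card_pos

lemma filter_ge_insert {n : ℕ} (hn : n < d) :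
    univ.filter (fun k : Fin d => n ≤ (k : ℕ)) =
      insert ⟨n, hn⟩ (univ.filter (fun k : Fin d => n + 1 ≤ (k : ℕ))) := by
  ext k
  simp only [Finset.mem_filter, Finset.mem_univ, true_and, Finset.mem_insert]
  constructor
  · intro h
    rcases eq_or_lt_of_le h with h' | h'
    · left; exact Fin.ext h'.symm
    · right; omega
  · rintro (rfl | h)
    · simp
    · omega

lemma filter_lt_succ_insert {n : ℕ} (hn : n < d) :
    univ.filter (fun k : Fin d => (k : ℕ) < n + 1) =
      insert ⟨n, hn⟩ (univ.filter (fun k : Fin d => (k : ℕ) < n)) := by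
  ext k
  simp only [Finset.mem_filter, Finset.mem_univ, true_and, Finset.mem_insert]
  constructor
  · intro h
    rcases Nat.lt_succ_iff_lt_or_eq.1 h with h' | h'
    · right; exact h'
    · left; exact Fin.ext h'
  · rintro (rfl | h)
    · simp
    · omega

lemma cylCard_succ {n : ℕ} (hn : n < d) :
    cylCard W n = (Fintype.card (W ⟨n, hn⟩) : ℝ) * cylCard W (n + 1) := by
  rw [cylCard, filter_ge_insert hn, Finset.prod_insert (by simp), cylCard]

lemma sum_one_Cyl : ∀ j n, d ≤ n + j → ∀ w : (i : Fin d) → W i,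
    ∑ _w' ∈ Cyl n w, (1 : ℝ) = cylCard W n := by
  intro j
  induction j with
  | zero =>
    intro n hn w
    rw [Cyl_of_ge (by omega), Finset.sum_singleton, cylCard,
      Finset.filter_false_of_mem (fun k _ => by omega), Finset.prod_empty]
  | succ j ih =>
    intro n hn w
    rcases le_or_gt d n with h | h
    · rw [Cyl_of_ge h, Finset.sum_singleton, cylCard,
        Finset.filter_false_of_mem (fun k _ => by omega), Finset.prod_empty]
    · rw [sum_Cyl_succ h, cylCard_succ h]
      rw [Finset.sum_congr rfl (fun v _ => ih (n+1) (by omega) _)]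
      rw [Finset.sum_const, nsmul_eq_mul]
      simp

section Q

variable {q : (k : Fin d) → ((i : Fin d) → W i) → ℝ}

lemma q_congr (hq1 : ∀ (k : Fin d) (w w' : (i : Fin d) → W i),
      (∀ i : Fin d, i ≤ k → w' i = w i) → q k w' = q k w)
    {k : Fin d} {w w' : (i : Fin d) → W i} (h : w' ∈ Cyl ((k : ℕ) + 1) w) :
    q k w' = q k w :=
  hq1 k w w' fun i hi => mem_Cyl.1 h i (by omega)

lemma marg_prod
    (hq1 : ∀ (k : Fin d) (w w' : (i : Fin d) → W i),
      (∀ i : Fin d, i ≤ k → w' i = w i) → q k w' = q k w)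
    (hq2 : ∀ (k : Fin d) (w : (i : Fin d) → W i),
      ∑ v : W k, q k (Function.update w k v) = 1) :
    ∀ j n, d ≤ n + j → ∀ w : (i : Fin d) → W i,
    marg (fun u => ∏ k, q k u) n w =
      ∏ k ∈ univ.filter (fun k : Fin d => (k : ℕ) < n), q k w := by
  intro j
  induction j with
  | zero =>
    intro n hn w
    rw [marg, Cyl_of_ge (by omega), Finset.sum_singleton,
      Finset.filter_true_of_mem (fun k _ => by omega)]
  | succ j ih =>
    intro n hn w
    rcases le_or_gt d n with h | h
    · rw [marg, Cyl_of_ge h, Finset.sum_singleton,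
        Finset.filter_true_of_mem (fun k _ => by omega)]
    · rw [marg_rec h]
      have step : ∀ v : W ⟨n, h⟩,
          marg (fun u => ∏ k, q k u) (n + 1) (Function.update w ⟨n, h⟩ v) =
            q ⟨n, h⟩ (Function.update w ⟨n, h⟩ v) *
              ∏ k ∈ univ.filter (fun k : Fin d => (k : ℕ) < n), q k w := by
        intro v
        rw [ih (n + 1) (by omega), filter_lt_succ_insert h,
          Finset.prod_insert (by simp)]
        congr 1
        refine Finset.prod_congr rfl fun k hk => ?_
        have hk' : (k : ℕ) < n := by simpa using hk
        refine hq1 k w _ fun i hi => ?_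
        refine Function.update_of_ne (Fin.ne_of_val_ne ?_) _ _
        have : (i : ℕ) ≤ (k : ℕ) := hi
        simp; omega
      rw [Finset.sum_congr rfl fun v _ => step v, ← Finset.sum_mul, hq2 ⟨n, h⟩ w,
        one_mul]

lemma card_Cyl (n : ℕ) (w : (i : Fin d) → W i) :
    (((Cyl n w).card : ℝ)) = cylCard W n := by
  have := sum_one_Cyl (W := W) d n (by omega) w
  simpa using this

lemma sum_q_Cyl
    (hq1 : ∀ (k : Fin d) (w w' : (i : Fin d) → W i),
      (∀ i : Fin d, i ≤ k → w' i = w i) → q k w' = q k w)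
    (hq2 : ∀ (k : Fin d) (w : (i : Fin d) → W i),
      ∑ v : W k, q k (Function.update w k v) = 1)
    (k : Fin d) (w : (i : Fin d) → W i) :
    ∑ w' ∈ Cyl (k : ℕ) w, q k w' = cylCard W ((k : ℕ) + 1) := by
  rw [sum_Cyl_succ k.isLt]
  have step : ∀ v : W k,
      ∑ w' ∈ Cyl ((k : ℕ) + 1) (Function.update w k v), q k w' =
        cylCard W ((k : ℕ) + 1) * q k (Function.update w k v) := by
    intro v
    rw [Finset.sum_congr rfl fun x hx => q_congr hq1 hx, Finset.sum_const,
      nsmul_eq_mul, card_Cyl]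
  rw [Finset.sum_congr rfl fun v _ => step v, ← Finset.mul_sum, hq2 k w, mul_one]

lemma sum_margq
    (hq1 : ∀ (k : Fin d) (w w' : (i : Fin d) → W i),
      (∀ i : Fin d, i ≤ k → w' i = w i) → q k w' = q k w)
    (hq2 : ∀ (k : Fin d) (w : (i : Fin d) → W i),
      ∑ v : W k, q k (Function.update w k v) = 1)
    (k : Fin d) :
    ∀ j n, n + j = (k : ℕ) → ∀ w : (i : Fin d) → W i,
    ∑ w' ∈ Cyl n w, marg P (k : ℕ) w' * q k w' =
      cylCard W ((k : ℕ) + 1) * marg P n w := by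
  intro j
  induction j with
  | zero =>
    intro n hn w
    subst hn
    rw [Finset.sum_congr rfl fun x hx => by rw [marg_congr hx],
      ← Finset.mul_sum, sum_q_Cyl hq1 hq2 k w, mul_comm]
  | succ j ih =>
    intro n hn w
    have hnd : n < d := by have := k.isLt; omega
    rw [sum_Cyl_succ hnd, Finset.sum_congr rfl fun v _ => ih (n + 1) (by omega) _,
      ← Finset.mul_sum, ← marg_rec hnd]

lemma sum_margq_univ
    (hq1 : ∀ (k : Fin d) (w w' : (i : Fin d) → W i),
      (∀ i : Fin d, i ≤ k → w' i = w i) → q k w' = q k w)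
    (hq2 : ∀ (k : Fin d) (w : (i : Fin d) → W i),
      ∑ v : W k, q k (Function.update w k v) = 1)
    (hP1 : ∑ w, P w = 1) (k : Fin d) :
    ∑ w, marg P (k : ℕ) w * q k w = cylCard W ((k : ℕ) + 1) := by
  have w0 : (i : Fin d) → W i := fun i => Classical.arbitrary _
  have := sum_margq (P := P) hq1 hq2 k (k : ℕ) 0 (by omega) w0
  rw [Cyl_zero w0] at this
  rw [this, marg_zero hP1, mul_one]

/-- Canonical representative of a level-`n` cylinder. -/
def rep (n : ℕ) (w0 w : (i : Fin d) → W i) : (i : Fin d) → W i :=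
  fun i => if (i : ℕ) < n then w i else w0 i

lemma rep_eq_iff {n : ℕ} {w0 w w' : (i : Fin d) → W i} :
    rep n w0 w' = rep n w0 w ↔ ∀ i : Fin d, (i : ℕ) < n → w' i = w i := by
  constructor
  · intro h i hi
    have := congrFun h i
    simpa [rep, hi] using this
  · intro h
    funext i
    by_cases hi : (i : ℕ) < n
    · simp [rep, hi, h i hi]
    · simp [rep, hi]

lemma T_le_one
    (hq1 : ∀ (k : Fin d) (w w' : (i : Fin d) → W i),
      (∀ i : Fin d, i ≤ k → w' i = w i) → q k w' = q k w)
    (hq2 : ∀ (k : Fin d) (w : (i : Fin d) → W i),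
      ∑ v : W k, q k (Function.update w k v) = 1)
    (hq3 : ∀ (k : Fin d) (w : (i : Fin d) → W i), 0 < q k w)
    (hP0 : ∀ w, 0 ≤ P w) (hP1 : ∑ w, P w = 1) (k : Fin d) :
    ∑ w, P w * (marg P (k : ℕ) w * q k w / marg P ((k : ℕ) + 1) w) ≤ 1 := by
  classical
  have w0 : (i : Fin d) → W i := fun i => Classical.arbitrary _
  set n := (k : ℕ) + 1 with hndef
  have key : ∀ y : (i : Fin d) → W i,
      (∑ w ∈ univ.filter (fun w' => rep n w0 w' = y),
          P w * (marg P (k : ℕ) w * q k w / marg P n w))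
        ≤ (∑ w ∈ univ.filter (fun w' => rep n w0 w' = y),
            marg P (k : ℕ) w * q k w) / cylCard W n := by
    intro y
    rcases Finset.eq_empty_or_nonempty
        (univ.filter (fun w' => rep n w0 w' = y)) with he | ⟨u, hu⟩
    · rw [he]
      simp
    · have hset : univ.filter (fun w' => rep n w0 w' = y) = Cyl n u := by
        ext x
        simp only [Finset.mem_filter, Finset.mem_univ, true_and, mem_Cyl]
        rw [← (Finset.mem_filter.1 hu).2]
        exact rep_eq_iff
      rw [hset]
      have hconst : ∀ x ∈ Cyl n u,
          P x * (marg P (k : ℕ) x * q k x / marg P n x) =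
            P x * (marg P (k : ℕ) u * q k u / marg P n u) := by
        intro x hx
        rw [marg_congr (Cyl_anti (by omega) u hx), q_congr hq1 hx, marg_congr hx]
      have hconst2 : ∀ x ∈ Cyl n u,
          marg P (k : ℕ) x * q k x = marg P (k : ℕ) u * q k u := by
        intro x hx
        rw [marg_congr (Cyl_anti (by omega) u hx), q_congr hq1 hx]
      rw [Finset.sum_congr rfl hconst, Finset.sum_congr rfl hconst2,
        ← Finset.sum_mul, Finset.sum_const, nsmul_eq_mul, card_Cyl,
        mul_div_assoc, mul_div_cancel_left₀ _ (ne_of_gt (cylCard_pos n))]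
      have hmarg : (∑ x ∈ Cyl n u, P x) = marg P n u := rfl
      rw [hmarg]
      have ht0 : 0 ≤ marg P (k : ℕ) u * q k u :=
        mul_nonneg (marg_nonneg hP0 _ _) (le_of_lt (hq3 k u))
      rcases eq_or_lt_of_le (marg_nonneg hP0 n u) with hs | hs
      · rw [← hs]
        simpa using ht0
      · have heq : marg P n u * (marg P (k : ℕ) u * (q k u / marg P n u)) =
            marg P (k : ℕ) u * q k u := by
          field_simp
        exact le_of_eq heq
  calc ∑ w, P w * (marg P (k : ℕ) w * q k w / marg P n w)
      = ∑ y : (i : Fin d) → W i, ∑ w ∈ univ.filter (fun w' => rep n w0 w' = y),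
          P w * (marg P (k : ℕ) w * q k w / marg P n w) :=
        (Finset.sum_fiberwise_of_maps_to (fun x _ => Finset.mem_univ _) _).symm
    _ ≤ ∑ y : (i : Fin d) → W i, (∑ w ∈ univ.filter (fun w' => rep n w0 w' = y),
          marg P (k : ℕ) w * q k w) / cylCard W n := Finset.sum_le_sum fun y _ => key y
    _ = (∑ y : (i : Fin d) → W i, ∑ w ∈ univ.filter (fun w' => rep n w0 w' = y),
          marg P (k : ℕ) w * q k w) / cylCard W n := by rw [Finset.sum_div]
    _ = (∑ w, marg P (k : ℕ) w * q k w) / cylCard W n := by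
        rw [Finset.sum_fiberwise_of_maps_to (fun x _ => Finset.mem_univ _) _]
    _ = 1 := by
        rw [sum_margq_univ hq1 hq2 hP1 k, div_self (ne_of_gt (cylCard_pos n))]

lemma D_nonneg
    (hq1 : ∀ (k : Fin d) (w w' : (i : Fin d) → W i),
      (∀ i : Fin d, i ≤ k → w' i = w i) → q k w' = q k w)
    (hq2 : ∀ (k : Fin d) (w : (i : Fin d) → W i),
      ∑ v : W k, q k (Function.update w k v) = 1)
    (hq3 : ∀ (k : Fin d) (w : (i : Fin d) → W i), 0 < q k w)
    (hP0 : ∀ w, 0 ≤ P w) (hP1 : ∑ w, P w = 1) (k : Fin d) :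
    0 ≤ ∑ w, P w * (Real.log (marg P ((k : ℕ) + 1) w) -
        Real.log (marg P (k : ℕ) w) - Real.log (q k w)) := by
  have pointwise : ∀ w : (i : Fin d) → W i,
      P w - P w * (marg P (k : ℕ) w * q k w / marg P ((k : ℕ) + 1) w) ≤
        P w * (Real.log (marg P ((k : ℕ) + 1) w) -
          Real.log (marg P (k : ℕ) w) - Real.log (q k w)) := by
    intro w
    rcases eq_or_lt_of_le (hP0 w) with hp | hp
    · rw [← hp]
      simp
    · have hm1 : 0 < marg P ((k : ℕ) + 1) w := lt_of_lt_of_le hp (le_marg hP0 _ w)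
      have hm0 : 0 < marg P (k : ℕ) w := lt_of_lt_of_le hm1 (marg_succ_le hP0 _ w)
      have hq : 0 < q k w := hq3 k w
      have hlog : Real.log (marg P (k : ℕ) w * q k w / marg P ((k : ℕ) + 1) w) ≤
          marg P (k : ℕ) w * q k w / marg P ((k : ℕ) + 1) w - 1 :=
        Real.log_le_sub_one_of_pos (by positivity)
      rw [Real.log_div (by positivity) (ne_of_gt hm1),
        Real.log_mul (ne_of_gt hm0) (ne_of_gt hq)] at hlog
      have : 1 - marg P (k : ℕ) w * q k w / marg P ((k : ℕ) + 1) w ≤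
          Real.log (marg P ((k : ℕ) + 1) w) - Real.log (marg P (k : ℕ) w) -
            Real.log (q k w) := by linarith
      calc P w - P w * (marg P (k : ℕ) w * q k w / marg P ((k : ℕ) + 1) w)
          = P w * (1 - marg P (k : ℕ) w * q k w / marg P ((k : ℕ) + 1) w) := by ring
        _ ≤ P w * (Real.log (marg P ((k : ℕ) + 1) w) -
            Real.log (marg P (k : ℕ) w) - Real.log (q k w)) :=
          mul_le_mul_of_nonneg_left this (le_of_lt hp)
  calc (0 : ℝ) = 1 - 1 := by ring
    _ ≤ (∑ w, P w) - ∑ w, P w * (marg P (k : ℕ) w * q k w / marg P ((k : ℕ) + 1) w) := by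
        rw [hP1]
        have := T_le_one hq1 hq2 hq3 hP0 hP1 k
        linarith
    _ = ∑ w, (P w - P w * (marg P (k : ℕ) w * q k w / marg P ((k : ℕ) + 1) w)) := by
        rw [Finset.sum_sub_distrib]
    _ ≤ _ := Finset.sum_le_sum fun w _ => pointwise w

lemma sum_prodq_univ
    (hq1 : ∀ (k : Fin d) (w w' : (i : Fin d) → W i),
      (∀ i : Fin d, i ≤ k → w' i = w i) → q k w' = q k w)
    (hq2 : ∀ (k : Fin d) (w : (i : Fin d) → W i),
      ∑ v : W k, q k (Function.update w k v) = 1) :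
    ∑ w, ∏ k, q k w = 1 := by
  have w0 : (i : Fin d) → W i := fun i => Classical.arbitrary _
  have := marg_prod hq1 hq2 d 0 (by omega) w0
  rw [marg, Cyl_zero w0] at this
  rw [this, Finset.filter_false_of_mem (fun k _ => by omega), Finset.prod_empty]

lemma marg_prodq
    (hq1 : ∀ (k : Fin d) (w w' : (i : Fin d) → W i),
      (∀ i : Fin d, i ≤ k → w' i = w i) → q k w' = q k w)
    (hq2 : ∀ (k : Fin d) (w : (i : Fin d) → W i),
      ∑ v : W k, q k (Function.update w k v) = 1)
    (n : ℕ) (w : (i : Fin d) → W i) :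
    marg (fun u => ∏ k, q k u) n w =
      ∏ k ∈ univ.filter (fun k : Fin d => (k : ℕ) < n), q k w :=
  marg_prod hq1 hq2 d n (by omega) w

lemma marg_prodq_pos
    (hq1 : ∀ (k : Fin d) (w w' : (i : Fin d) → W i),
      (∀ i : Fin d, i ≤ k → w' i = w i) → q k w' = q k w)
    (hq2 : ∀ (k : Fin d) (w : (i : Fin d) → W i),
      ∑ v : W k, q k (Function.update w k v) = 1)
    (hq3 : ∀ (k : Fin d) (w : (i : Fin d) → W i), 0 < q k w)
    (n : ℕ) (w : (i : Fin d) → W i) :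
    0 < marg (fun u => ∏ k, q k u) n w := by
  rw [marg_prodq hq1 hq2]
  exact Finset.prod_pos fun k _ => hq3 k w

lemma marg_prodq_succ
    (hq1 : ∀ (k : Fin d) (w w' : (i : Fin d) → W i),
      (∀ i : Fin d, i ≤ k → w' i = w i) → q k w' = q k w)
    (hq2 : ∀ (k : Fin d) (w : (i : Fin d) → W i),
      ∑ v : W k, q k (Function.update w k v) = 1)
    (k : Fin d) (w : (i : Fin d) → W i) :
    marg (fun u => ∏ j, q j u) ((k : ℕ) + 1) w =
      marg (fun u => ∏ j, q j u) (k : ℕ) w * q k w := by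
  rw [marg_prodq hq1 hq2, marg_prodq hq1 hq2, filter_lt_succ_insert k.isLt,
    Finset.prod_insert (by simp), mul_comm]

lemma D_prodq_zero
    (hq1 : ∀ (k : Fin d) (w w' : (i : Fin d) → W i),
      (∀ i : Fin d, i ≤ k → w' i = w i) → q k w' = q k w)
    (hq2 : ∀ (k : Fin d) (w : (i : Fin d) → W i),
      ∑ v : W k, q k (Function.update w k v) = 1)
    (hq3 : ∀ (k : Fin d) (w : (i : Fin d) → W i), 0 < q k w)
    (k : Fin d) :
    ∑ w, (fun u => ∏ j, q j u) w *
      (Real.log (marg (fun u => ∏ j, q j u) ((k : ℕ) + 1) w) -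
        Real.log (marg (fun u => ∏ j, q j u) (k : ℕ) w) -
        Real.log (q k w)) = 0 := by
  refine Finset.sum_eq_zero fun w _ => ?_
  rw [marg_prodq_succ hq1 hq2 k w,
    Real.log_mul (ne_of_gt (marg_prodq_pos hq1 hq2 hq3 _ w)) (ne_of_gt (hq3 k w))]
  ring

end Q


lemma telescope {d : ℕ} (lam : Fin d → ℝ) (H : ℕ → ℝ) (H0 : H 0 = 0) :
    ∑ k : Fin d, (lam k - (if h : (k : ℕ) + 1 < d then lam ⟨(k : ℕ) + 1, h⟩ else 0)) *
        H ((k : ℕ) + 1)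
      = ∑ k : Fin d, lam k * (H ((k : ℕ) + 1) - H (k : ℕ)) := by
  classical
  set G : ℕ → ℝ := fun n => (if h : n < d then lam ⟨n, h⟩ else 0) * H n with hG
  have h1 : ∀ k : Fin d,
      (lam k - (if h : (k : ℕ) + 1 < d then lam ⟨(k : ℕ) + 1, h⟩ else 0)) * H ((k : ℕ) + 1)
        = lam k * (H ((k : ℕ) + 1) - H (k : ℕ)) + (G (k : ℕ) - G ((k : ℕ) + 1)) := by
    intro k
    simp only [hG, dif_pos k.isLt, Fin.eta]
    ring
  have h2 : ∑ k : Fin d, (G (k : ℕ) - G ((k : ℕ) + 1)) = G 0 - G d := by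
    rw [Fin.sum_univ_eq_sum_range (fun n => G n - G (n + 1)) d]
    exact Finset.sum_range_sub' G d
  have h3 : G d = 0 := by simp [hG]
  have h4 : G 0 = 0 := by simp [hG, H0]
  rw [Finset.sum_congr rfl fun k _ => h1 k, Finset.sum_add_distrib, h2, h3, h4]
  ring

end SSG

open SSG in
/-- **self-similar Gibbs measure minimizes multiscale entropic functional.**
With finite parameter sets `W 0, …, W (d-1)`, per-level losses `ℓ k` depending only on the
first `k+1` coordinates, temperatures `λ₁ ≥ ⋯ ≥ λ_d > 0` (with `λ_{d+1} = 0`), the product of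
conditional Gibbs measures `P*` attains the minimum over all pmfs `P` of
`E_P[ℓ^{(λ)}(W)] - Σ_k (λ_k - λ_{k+1})·H(W₁^k)`. -/
theorem self_similar_gibbs_minimizer
    (d : ℕ) (hd : 1 ≤ d) (W : Fin d → Type*)
    [∀ k, Fintype (W k)] [∀ k, Nonempty (W k)] [∀ k, DecidableEq (W k)]
    (ℓ : (k : Fin d) → ((i : Fin d) → W i) → ℝ)
    (hdep : ∀ (k : Fin d) (w w' : (i : Fin d) → W i),
      (∀ i ≤ k, w i = w' i) → ℓ k w = ℓ k w')
    (lam : Fin d → ℝ) (hpos : ∀ k, 0 < lam k)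
    (hmono : ∀ j k : Fin d, j ≤ k → lam k ≤ lam j)
    (gap : Fin d → ℝ)
    (hgap : ∀ k : Fin d,
      gap k = lam k - (if h : (k : ℕ) + 1 < d then lam ⟨(k : ℕ) + 1, h⟩ else 0))
    (Pstar : ((i : Fin d) → W i) → ℝ)
    (hPstar : ∀ w, Pstar w = ∏ k, (Real.exp (-ℓ k w / lam k) /
        ∑ v : W k, Real.exp (-ℓ k (Function.update w k v) / lam k)))
    (lbar : (k : Fin d) → ((i : Fin d) → W i) → ℝ)
    (hlbar : ∀ k w, lbar k w = -lam k * Real.log ((1 / (Fintype.card (W k) : ℝ)) *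
        ∑ v : W k, Real.exp (-ℓ k (Function.update w k v) / lam k)))
    (elllam : ((i : Fin d) → W i) → ℝ)
    (helllam : ∀ w, elllam w = ∑ k, (ℓ k w - lbar k w))
    (Hpre : (((i : Fin d) → W i) → ℝ) → Fin d → ℝ)
    (hHpre : ∀ P k, Hpre P k = -∑ w : (i : Fin d) → W i, P w *
        Real.log (∑ w' ∈ Finset.univ.filter
          (fun w' : (i : Fin d) → W i => ∀ i ≤ k, w' i = w i), P w'))
    (P : ((i : Fin d) → W i) → ℝ) (hP0 : ∀ w, 0 ≤ P w) (hP1 : ∑ w, P w = 1) :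
    (∑ w, Pstar w * elllam w) - ∑ k, gap k * Hpre Pstar k
      ≤ (∑ w, P w * elllam w) - ∑ k, gap k * Hpre P k := by
  classical
  set Z : (k : Fin d) → ((i : Fin d) → W i) → ℝ :=
    fun k w => ∑ v : W k, Real.exp (-ℓ k (Function.update w k v) / lam k) with hZdef
  set q : (k : Fin d) → ((i : Fin d) → W i) → ℝ :=
    fun k w => Real.exp (-ℓ k w / lam k) / Z k w with hqdef
  have hZpos : ∀ (k : Fin d) (w : (i : Fin d) → W i), 0 < Z k w := fun k w =>
    Finset.sum_pos (fun v _ => Real.exp_pos _) Finset.univ_nonempty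
  have hq3 : ∀ (k : Fin d) (w : (i : Fin d) → W i), 0 < q k w := fun k w =>
    div_pos (Real.exp_pos _) (hZpos k w)
  have hZcongr : ∀ (k : Fin d) (w w' : (i : Fin d) → W i),
      (∀ i : Fin d, i ≤ k → w' i = w i) → Z k w' = Z k w := by
    intro k w w' h
    refine Finset.sum_congr rfl fun v _ => ?_
    rw [hdep k (Function.update w' k v) (Function.update w k v) ?_]
    intro i hi
    by_cases hik : i = k
    · subst hik; rw [Function.update_self, Function.update_self]
    · rw [Function.update_of_ne hik, Function.update_of_ne hik]; exact h i hi
  have hq1 : ∀ (k : Fin d) (w w' : (i : Fin d) → W i),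
      (∀ i : Fin d, i ≤ k → w' i = w i) → q k w' = q k w := by
    intro k w w' h
    simp only [hqdef]
    rw [hdep k w' w h, hZcongr k w w' h]
  have hq2 : ∀ (k : Fin d) (w : (i : Fin d) → W i),
      ∑ v : W k, q k (Function.update w k v) = 1 := by
    intro k w
    have hv : ∀ v : W k, q k (Function.update w k v) =
        Real.exp (-ℓ k (Function.update w k v) / lam k) / Z k w := by
      intro v
      simp only [hqdef, hZdef, Function.update_idem]
    rw [Finset.sum_congr rfl fun v _ => hv v, ← Finset.sum_div]
    exact div_self (ne_of_gt (hZpos k w))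
  -- pointwise loss identity
  have hlossq : ∀ (k : Fin d) (w : (i : Fin d) → W i),
      ℓ k w - lbar k w = -(lam k) * Real.log (q k w)
        - lam k * Real.log (Fintype.card (W k)) := by
    intro k w
    have hc : (0 : ℝ) < (Fintype.card (W k) : ℝ) := by exact_mod_cast Fintype.card_pos
    have hZ := hZpos k w
    have hlam := hpos k
    rw [hlbar k w]
    have h1 : Real.log (q k w) = -ℓ k w / lam k - Real.log (Z k w) := by
      rw [hqdef]
      rw [Real.log_div (Real.exp_ne_zero _) (ne_of_gt hZ), Real.log_exp]
    rw [h1, Real.log_mul (by positivity) (ne_of_gt hZ), one_div, Real.log_inv]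
    field_simp
    ring
  -- rewrite Hpre via marg
  have hHpre' : ∀ (Q : ((i : Fin d) → W i) → ℝ) (k : Fin d),
      Hpre Q k = -∑ w, Q w * Real.log (marg Q ((k : ℕ) + 1) w) := by
    intro Q k
    rw [hHpre Q k]
    refine congrArg Neg.neg (Finset.sum_congr rfl fun w _ => ?_)
    have hset : Finset.univ.filter
        (fun w' : (i : Fin d) → W i => ∀ i ≤ k, w' i = w i) =
          Cyl ((k : ℕ) + 1) w := by
      ext u
      simp only [Finset.mem_filter, Finset.mem_univ, true_and, mem_Cyl]
      constructor
      · intro h i hi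
        exact h i (Fin.le_def.2 (by omega))
      · intro h i hi
        exact h i (by have := Fin.le_def.1 hi; omega)
    rw [hset]
    rfl
  -- the master identity
  have master : ∀ Q : ((i : Fin d) → W i) → ℝ, (∑ w, Q w = 1) →
      (∑ w, Q w * elllam w) - ∑ k, gap k * Hpre Q k =
        (∑ k : Fin d, lam k * ∑ w, Q w *
          (Real.log (marg Q ((k : ℕ) + 1) w) - Real.log (marg Q (k : ℕ) w)
            - Real.log (q k w)))
        - ∑ k : Fin d, lam k * Real.log (Fintype.card (W k)) := by
    intro Q hQ1
    set H : ℕ → ℝ := fun n => -∑ w, Q w * Real.log (marg Q n w) with hH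
    have H0 : H 0 = 0 := by
      simp only [hH]
      rw [Finset.sum_congr rfl fun w (_ : w ∈ Finset.univ) => by
        rw [marg_zero hQ1, Real.log_one, mul_zero]]
      simp
    have loss : ∑ w, Q w * elllam w =
        ∑ k : Fin d, (-(lam k) * ∑ w, Q w * Real.log (q k w)
          - lam k * Real.log (Fintype.card (W k))) := by
      rw [Finset.sum_congr rfl fun w (_ : w ∈ Finset.univ) => by
        rw [helllam w, Finset.mul_sum], Finset.sum_comm]
      refine Finset.sum_congr rfl fun k _ => ?_
      have hterm : ∀ w : (i : Fin d) → W i, Q w * (ℓ k w - lbar k w) =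
          -(lam k) * (Q w * Real.log (q k w))
            - (lam k * Real.log (Fintype.card (W k))) * Q w := by
        intro w
        rw [hlossq k w]
        ring
      rw [Finset.sum_congr rfl fun w _ => hterm w, Finset.sum_sub_distrib,
        ← Finset.mul_sum, ← Finset.mul_sum, hQ1, mul_one]
    have ent : ∑ k, gap k * Hpre Q k
        = ∑ k : Fin d, lam k * (H ((k : ℕ) + 1) - H (k : ℕ)) := by
      have hk : ∀ k : Fin d, gap k * Hpre Q k =
          (lam k - (if h : (k : ℕ) + 1 < d then lam ⟨(k : ℕ) + 1, h⟩ else 0)) *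
            H ((k : ℕ) + 1) := by
        intro k
        rw [hgap k, hHpre' Q k]
      rw [Finset.sum_congr rfl fun k _ => hk k]
      exact telescope lam H H0
    have Dsplit : ∀ k : Fin d,
        ∑ w, Q w * (Real.log (marg Q ((k : ℕ) + 1) w) - Real.log (marg Q (k : ℕ) w)
          - Real.log (q k w))
        = (-(H ((k : ℕ) + 1))) - (-(H (k : ℕ))) - ∑ w, Q w * Real.log (q k w) := by
      intro k
      simp only [hH, neg_neg, mul_sub]
      rw [Finset.sum_sub_distrib, Finset.sum_sub_distrib]
    rw [loss, ent, Finset.sum_sub_distrib, sub_right_comm]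
    congr 1
    rw [← Finset.sum_sub_distrib]
    refine Finset.sum_congr rfl fun k _ => ?_
    rw [Dsplit k]
    ring
  -- Pstar is the product of the kernels
  have hPfun : Pstar = fun u => ∏ k, q k u := by
    funext u
    rw [hPstar u]
  have hPstar1 : ∑ w, Pstar w = 1 := by
    rw [hPfun]
    exact sum_prodq_univ hq1 hq2
  rw [master Pstar hPstar1, master P hP1]
  refine sub_le_sub_right ?_ _
  have hzero : (∑ k : Fin d, lam k * ∑ w, Pstar w *
      (Real.log (marg Pstar ((k : ℕ) + 1) w) - Real.log (marg Pstar (k : ℕ) w)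
        - Real.log (q k w))) = 0 := by
    rw [hPfun]
    refine Finset.sum_eq_zero fun k _ => ?_
    rw [D_prodq_zero hq1 hq2 hq3 k, mul_zero]
  rw [hzero]
  refine Finset.sum_nonneg fun k _ => ?_
  exact mul_nonneg (le_of_lt (hpos k)) (D_nonneg hq1 hq2 hq3 hP0 hP1 k)
end

section
/- Let d ≥ 1, let W₁, …, W_d be nonempty finite sets, let S be a random variable taking finitely many values 𝗌 with law P_S, and for each 1 ≤ k ≤ d let ℓ_k(w₁^k, 𝗌) ∈ ℝ be a loss depending on w₁^k ∈ W₁×⋯×W_k and the sample 𝗌. Let λ₁ ≥ ⋯ ≥ λ_d > 0 with λ_{d+1} := 0. Define P*(w_k | w₁^{k−1}, 𝗌) := exp(−ℓ_k(w₁^k,𝗌)/λ_k) / Σ_{w_k'} exp(−ℓ_k(w₁^{k−1}w_k',𝗌)/λ_k) and P*_{W|S} := Π_{k=1}^d P*_{W_k|W₁^{k−1} S}. Define ℓ̄_k(w₁^{k−1},𝗌) := −λ_k·log((1/|W_k|)·Σ_{w_k'} exp(−ℓ_k(w₁^{k−1}w_k',𝗌)/λ_k)) and ℓ^{(λ)}(w,𝗌)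 := Σ_k (ℓ_k(w₁^k,𝗌) − ℓ̄_k(w₁^{k−1},𝗌)). Then P*_{W|S} attains the minimum, over all conditional distributions P_{W|S}, of E[ℓ^{(λ)}(W,S)] − Σ_{k=1}^d (λ_k − λ_{k+1})·H(W₁^k | S), where (S, W) ∼ P_S·P_{W|S} and H(W₁^k|S) is conditional Shannon entropy. -/
set_option linter.unusedSectionVars false
set_option linter.unusedVariables false
open Finset Real Function

namespace GibbsAux

variable {d : ℕ} {W : Fin d → Type*} [∀ k, Fintype (W k)] [∀ k, DecidableEq (W k)]

/-- Equivalence class of `w` for agreement on coordinates `< j`. -/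
def C (j : ℕ) (w : (i : Fin d) → W i) : Finset ((i : Fin d) → W i) :=
  Finset.univ.filter (fun w' => ∀ i : Fin d, (i : ℕ) < j → w' i = w i)

lemma mem_C {j : ℕ} {w w' : (i : Fin d) → W i} :
    w' ∈ C j w ↔ ∀ i : Fin d, (i : ℕ) < j → w' i = w i := by
  simp [C]

lemma C_symm {j : ℕ} {w w' : (i : Fin d) → W i} (h : w' ∈ C j w) : w ∈ C j w' := by
  rw [mem_C] at h ⊢
  intro i hi
  exact (h i hi).symm

lemma C_congr {j j' : ℕ} (hj : j' ≤ j) {w w' : (i : Fin d) → W i} (h : w' ∈ C j w) :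
    C j' w' = C j' w := by
  rw [mem_C] at h
  ext u
  rw [mem_C, mem_C]
  constructor <;> intro hu i hi
  · rw [hu i hi, h i (lt_of_lt_of_le hi hj)]
  · rw [hu i hi, h i (lt_of_lt_of_le hi hj)]

lemma card_C_const (j : ℕ) (w₁ w₂ : (i : Fin d) → W i) : (C j w₁).card = (C j w₂).card := by
  apply Finset.card_bij' (fun b _ => fun (i : Fin d) => if (i : ℕ) < j then w₂ i else b i)
    (fun b _ => fun (i : Fin d) => if (i : ℕ) < j then w₁ i else b i)
  · intro a ha; rw [mem_C]; intro i hi; simp [hi]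
  · intro a ha; rw [mem_C]; intro i hi; simp [hi]
  · intro a ha; rw [mem_C] at ha; funext i
    by_cases hi : (i : ℕ) < j <;> simp [hi, ha i]
  · intro a ha; rw [mem_C] at ha; funext i
    by_cases hi : (i : ℕ) < j <;> simp [hi, ha i]


lemma C_zero (w : (i : Fin d) → W i) : C 0 w = Finset.univ := by
  ext u; simp [mem_C]

lemma C_top {j : ℕ} (hj : d ≤ j) (w : (i : Fin d) → W i) : C j w = {w} := by
  ext u
  simp only [mem_C, Finset.mem_singleton]
  constructor
  · intro h; funext i; exact h i (lt_of_lt_of_le i.isLt hj)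
  · rintro rfl; intro i _; rfl

lemma self_mem_C (j : ℕ) (w : (i : Fin d) → W i) : w ∈ C j w := by
  rw [mem_C]; intro i _; rfl

/-- Partition the class at level `k` into classes at level `k+1` according to coordinate `k`. -/
lemma sum_C_split (k : Fin d) (w : (i : Fin d) → W i) (f : ((i : Fin d) → W i) → ℝ) :
    ∑ w' ∈ C (k : ℕ) w, f w' = ∑ v : W k, ∑ w' ∈ C ((k : ℕ) + 1) (Function.update w k v), f w' := by
  rw [← Finset.sum_fiberwise_of_maps_to (g := fun w' : (i : Fin d) → W i => w' k)
    (t := (Finset.univ : Finset (W k))) (fun x _ => Finset.mem_univ _)]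
  refine Finset.sum_congr rfl (fun v _ => Finset.sum_congr ?_ (fun _ _ => rfl))
  ext u
  simp only [Finset.mem_filter, mem_C]
  constructor
  · rintro ⟨hu, rfl⟩
    intro i hi
    rcases Nat.lt_succ_iff_lt_or_eq.mp hi with h | h
    · rw [hu i h]
      refine (Function.update_of_ne (fun he => ?_) _ _).symm
      simp [he] at h
    · have : i = k := Fin.ext h
      subst this; simp
  · intro hu
    have hk : u k = v := by
      have := hu k (Nat.lt_succ_self _); simpa using this
    refine ⟨fun i hi => ?_, hk⟩
    have := hu i (Nat.lt_succ_of_lt hi)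
    rw [this]
    refine Function.update_of_ne (fun he => ?_) _ _
    simp [he] at hi

/-- Double-counting / swap lemma. -/
lemma sum_swap_C (j : ℕ) (f g : ((i : Fin d) → W i) → ℝ) :
    ∑ w, (∑ w' ∈ C j w, f w') * g w = ∑ w, f w * ∑ w' ∈ C j w, g w' := by
  simp only [Finset.sum_mul, Finset.mul_sum]
  exact Finset.sum_comm' (fun x y => by
    simp only [Finset.mem_univ, true_and, and_true]
    exact ⟨C_symm, C_symm⟩)


/-- Marginal mass of the class of `w` at level `j`. -/
def Mlt (P : ((i : Fin d) → W i) → ℝ) (j : ℕ) (w : (i : Fin d) → W i) : ℝ :=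
  ∑ w' ∈ C j w, P w'

lemma Mlt_nonneg {P : ((i : Fin d) → W i) → ℝ} (hP0 : ∀ w, 0 ≤ P w) (j : ℕ)
    (w : (i : Fin d) → W i) : 0 ≤ Mlt P j w :=
  Finset.sum_nonneg (fun _ _ => hP0 _)

lemma Mlt_anti {P : ((i : Fin d) → W i) → ℝ} (hP0 : ∀ w, 0 ≤ P w) {j j' : ℕ} (h : j ≤ j')
    (w : (i : Fin d) → W i) : Mlt P j' w ≤ Mlt P j w := by
  apply Finset.sum_le_sum_of_subset_of_nonneg
  · intro u hu
    rw [mem_C] at hu ⊢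
    exact fun i hi => hu i (lt_of_lt_of_le hi h)
  · exact fun u _ _ => hP0 u

lemma self_le_Mlt {P : ((i : Fin d) → W i) → ℝ} (hP0 : ∀ w, 0 ≤ P w) (j : ℕ)
    (w : (i : Fin d) → W i) : P w ≤ Mlt P j w :=
  Finset.single_le_sum (fun u _ => hP0 u) (self_mem_C j w)

lemma Mlt_congr {P : ((i : Fin d) → W i) → ℝ} {j j' : ℕ} (hj : j' ≤ j)
    {w w' : (i : Fin d) → W i} (h : w' ∈ C j w) : Mlt P j' w' = Mlt P j' w := by
  unfold Mlt; rw [C_congr hj h]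

/-- Grouping identity: if `g` is constant on level-`j` classes then summing against the
marginal mass equals the class size times summing against `P`. -/
lemma group (j : ℕ) (w₀ : (i : Fin d) → W i) (P g : ((i : Fin d) → W i) → ℝ)
    (hg : ∀ w w', w' ∈ C j w → g w' = g w) :
    ∑ w, Mlt P j w * g w = ((C j w₀).card : ℝ) * ∑ w, P w * g w := by
  unfold Mlt
  rw [sum_swap_C j P g, Finset.mul_sum]
  refine Finset.sum_congr rfl (fun w _ => ?_)
  have : ∑ w' ∈ C j w, g w' = ((C j w₀).card : ℝ) * g w := by
    rw [Finset.sum_congr rfl (fun w' hw' => hg w w' hw'), Finset.sum_const,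
      card_C_const j w w₀, nsmul_eq_mul]
  rw [this]; ring

lemma card_C_pos (j : ℕ) (w : (i : Fin d) → W i) : 0 < (C j w).card :=
  Finset.card_pos.mpr ⟨w, self_mem_C j w⟩


section Gibbs

variable [∀ k, Nonempty (W k)]

/-- Normalizing constant at level `k`. -/
noncomputable def Zf (ℓk : ((i : Fin d) → W i) → ℝ) (lk : ℝ) (k : Fin d) (w : (i : Fin d) → W i) : ℝ :=
  ∑ v : W k, Real.exp (-ℓk (Function.update w k v) / lk)

/-- Conditional Gibbs weight at level `k`. -/
noncomputable def qf (ℓk : ((i : Fin d) → W i) → ℝ) (lk : ℝ) (k : Fin d) (w : (i : Fin d) → W i) : ℝ :=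
  Real.exp (-ℓk w / lk) / Zf ℓk lk k w

variable {ℓk : ((i : Fin d) → W i) → ℝ} {lk : ℝ} {k : Fin d}

lemma Zf_pos (w : (i : Fin d) → W i) : 0 < Zf ℓk lk k w :=
  Finset.sum_pos (fun v _ => Real.exp_pos _) Finset.univ_nonempty

lemma qf_pos (w : (i : Fin d) → W i) : 0 < qf ℓk lk k w :=
  div_pos (Real.exp_pos _) (Zf_pos w)

lemma Zf_update (w : (i : Fin d) → W i) (v : W k) :
    Zf ℓk lk k (Function.update w k v) = Zf ℓk lk k w := by
  unfold Zf
  refine Finset.sum_congr rfl (fun u _ => ?_)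
  rw [Function.update_idem]

lemma sum_qf (w : (i : Fin d) → W i) : ∑ v : W k, qf ℓk lk k (Function.update w k v) = 1 := by
  unfold qf
  rw [Finset.sum_congr rfl (fun v _ => by rw [Zf_update w v])]
  rw [← Finset.sum_div]
  exact div_self (ne_of_gt (Zf_pos w))

/-- If `ℓk` only depends on coordinates `≤ k` then `qf` is constant on level-`k+1` classes. -/
lemma qf_congr (hdepk : ∀ w w' : (i : Fin d) → W i,
      (∀ i : Fin d, i ≤ k → w i = w' i) → ℓk w = ℓk w')
    {w w' : (i : Fin d) → W i} (h : w' ∈ C ((k : ℕ) + 1) w) :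
    qf ℓk lk k w' = qf ℓk lk k w := by
  rw [mem_C] at h
  have hle : ∀ i : Fin d, i ≤ k → w' i = w i := by
    intro i hi
    exact h i (Nat.lt_succ_of_le (Fin.le_def.mp hi))
  have hℓ : ℓk w' = ℓk w := hdepk w' w hle
  have hZ : Zf ℓk lk k w' = Zf ℓk lk k w := by
    unfold Zf
    refine Finset.sum_congr rfl (fun v _ => ?_)
    congr 1
    congr 1
    congr 1
    apply hdepk
    intro i hi
    rcases eq_or_lt_of_le hi with rfl | hlt
    · simp
    · rw [Function.update_of_ne (Fin.ne_of_lt hlt), Function.update_of_ne (Fin.ne_of_lt hlt)]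
      exact hle i hi
  unfold qf
  rw [hℓ, hZ]


lemma sum_qf_class (hdepk : ∀ w w' : (i : Fin d) → W i,
      (∀ i : Fin d, i ≤ k → w i = w' i) → ℓk w = ℓk w')
    (w₀ w : (i : Fin d) → W i) :
    ∑ w' ∈ C (k : ℕ) w, qf ℓk lk k w' = ((C ((k : ℕ) + 1) w₀).card : ℝ) := by
  rw [sum_C_split k w (qf ℓk lk k)]
  have h1 : ∀ v : W k, ∑ w' ∈ C ((k : ℕ) + 1) (Function.update w k v), qf ℓk lk k w' =
      ((C ((k : ℕ) + 1) w₀).card : ℝ) * qf ℓk lk k (Function.update w k v) := by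
    intro v
    rw [Finset.sum_congr rfl (fun w' hw' => qf_congr hdepk hw'), Finset.sum_const,
      card_C_const _ _ w₀, nsmul_eq_mul]
  rw [Finset.sum_congr rfl (fun v _ => h1 v), ← Finset.mul_sum, sum_qf w, mul_one]

/-- The conditional relative entropy term at level `k` is nonnegative. -/
lemma Tk_nonneg (P : ((i : Fin d) → W i) → ℝ) (hP0 : ∀ w, 0 ≤ P w)
    (hdepk : ∀ w w' : (i : Fin d) → W i,
      (∀ i : Fin d, i ≤ k → w i = w' i) → ℓk w = ℓk w') :
    0 ≤ ∑ w, P w * (Real.log (Mlt P ((k : ℕ) + 1) w) - Real.log (Mlt P (k : ℕ) w)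
      - Real.log (qf ℓk lk k w)) := by
  have hΩ : Nonempty ((i : Fin d) → W i) := ⟨fun i => Classical.arbitrary _⟩
  obtain ⟨w₀⟩ := hΩ
  set g : ((i : Fin d) → W i) → ℝ := fun w =>
    Real.log (Mlt P ((k : ℕ) + 1) w) - Real.log (Mlt P (k : ℕ) w)
      - Real.log (qf ℓk lk k w) with hgdef
  have hg : ∀ w w', w' ∈ C ((k : ℕ) + 1) w → g w' = g w := by
    intro w w' h
    simp only [hgdef]
    rw [Mlt_congr le_rfl h, Mlt_congr (Nat.le_succ _) h, qf_congr hdepk h]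
  set c : ℝ := ((C ((k : ℕ) + 1) w₀).card : ℝ) with hcdef
  have hc : 0 < c := by
    simp only [hcdef]
    exact_mod_cast card_C_pos _ _
  have hgroup : ∑ w, Mlt P ((k : ℕ) + 1) w * g w = c * ∑ w, P w * g w :=
    group _ w₀ P g hg
  have hsum1 : ∑ w, Mlt P ((k : ℕ) + 1) w = c * ∑ w, P w := by
    have := group ((k : ℕ) + 1) w₀ P (fun _ => (1 : ℝ)) (fun _ _ _ => rfl)
    simpa using this
  have hsum2 : ∑ w, Mlt P (k : ℕ) w * qf ℓk lk k w = c * ∑ w, P w := by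
    unfold Mlt
    rw [sum_swap_C (k : ℕ) P (qf ℓk lk k)]
    rw [Finset.sum_congr rfl (fun w _ => by rw [sum_qf_class hdepk w₀ w])]
    rw [← Finset.sum_mul]
    ring
  have hpt : ∀ w, Mlt P ((k : ℕ) + 1) w - Mlt P (k : ℕ) w * qf ℓk lk k w
      ≤ Mlt P ((k : ℕ) + 1) w * g w := by
    intro w
    by_cases hp : Mlt P ((k : ℕ) + 1) w = 0
    · rw [hp, zero_mul, zero_sub, neg_nonpos]
      exact mul_nonneg (Mlt_nonneg hP0 _ _) (le_of_lt (qf_pos w))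
    · have hp' : 0 < Mlt P ((k : ℕ) + 1) w :=
        lt_of_le_of_ne (Mlt_nonneg hP0 _ _) (Ne.symm hp)
      have hm : 0 < Mlt P (k : ℕ) w := lt_of_lt_of_le hp' (Mlt_anti hP0 (Nat.le_succ _) w)
      have hq : 0 < Mlt P (k : ℕ) w * qf ℓk lk k w := mul_pos hm (qf_pos w)
      set p : ℝ := Mlt P ((k : ℕ) + 1) w
      set qq : ℝ := Mlt P (k : ℕ) w * qf ℓk lk k w with hqqdef
      have hgw : g w = Real.log p - Real.log qq := by
        simp only [hgdef, hqqdef]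
        rw [Real.log_mul (ne_of_gt hm) (ne_of_gt (qf_pos w))]
        ring
      rw [hgw]
      have hlog : Real.log qq - Real.log p ≤ qq / p - 1 := by
        rw [← Real.log_div (ne_of_gt hq) (ne_of_gt hp')]
        exact Real.log_le_sub_one_of_pos (div_pos hq hp')
      have h2 : p * (qq / p - 1) = qq - p := by field_simp
      nlinarith [mul_le_mul_of_nonneg_left hlog (le_of_lt hp')]
  have hzero : ∑ w, (Mlt P ((k : ℕ) + 1) w - Mlt P (k : ℕ) w * qf ℓk lk k w) = 0 := by
    rw [Finset.sum_sub_distrib, hsum1, hsum2, sub_self]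
  have hineq : (0 : ℝ) ≤ ∑ w, Mlt P ((k : ℕ) + 1) w * g w := by
    rw [← hzero]
    exact Finset.sum_le_sum (fun w _ => hpt w)
  rw [hgroup] at hineq
  by_contra hT
  push_neg at hT
  nlinarith


variable {ℓ : (k : Fin d) → ((i : Fin d) → W i) → ℝ} {lam : Fin d → ℝ}

/-- Product formula for the marginals of the self-similar Gibbs measure. -/
lemma Mlt_Pstar
    (hdep : ∀ (k : Fin d) (w w' : (i : Fin d) → W i),
      (∀ i ≤ k, w i = w' i) → ℓ k w = ℓ k w')
    {Pstar : ((i : Fin d) → W i) → ℝ}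
    (hPstar : ∀ w, Pstar w = ∏ k, qf (ℓ k) (lam k) k w)
    (j : ℕ) (w : (i : Fin d) → W i) :
    Mlt Pstar j w = ∏ k ∈ Finset.univ.filter (fun k : Fin d => (k : ℕ) < j),
      qf (ℓ k) (lam k) k w := by
  suffices H : ∀ (n j : ℕ) (w : (i : Fin d) → W i), d - j = n →
      Mlt Pstar j w = ∏ k ∈ Finset.univ.filter (fun k : Fin d => (k : ℕ) < j),
        qf (ℓ k) (lam k) k w by
    exact H (d - j) j w rfl
  intro n
  induction n with
  | zero =>
    intro j w hn
    have hj : d ≤ j := Nat.le_of_sub_eq_zero hn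
    have hfilt : Finset.univ.filter (fun k : Fin d => (k : ℕ) < j) = Finset.univ := by
      apply Finset.filter_true_of_mem
      intro k _
      exact lt_of_lt_of_le k.isLt hj
    rw [hfilt]
    unfold Mlt
    rw [C_top hj, Finset.sum_singleton, hPstar]
  | succ n ih =>
    intro j w hn
    have hj : j < d := by omega
    set kj : Fin d := ⟨j, hj⟩ with hkj
    have hco : (kj : ℕ) = j := rfl
    have step : Mlt Pstar j w = ∑ v : W kj, Mlt Pstar (j + 1) (Function.update w kj v) := by
      unfold Mlt
      rw [← hco, sum_C_split kj w Pstar]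
    rw [step]
    have hupd : ∀ (v : W kj) (k : Fin d), (k : ℕ) < j →
        qf (ℓ k) (lam k) k (Function.update w kj v) = qf (ℓ k) (lam k) k w := by
      intro v k hk
      apply qf_congr (fun a b hab => hdep k a b hab)
      rw [mem_C]
      intro i hi
      refine Function.update_of_ne (fun he => ?_) _ _
      have : (i : ℕ) = j := by rw [he]
      omega
    have hins : Finset.univ.filter (fun k : Fin d => (k : ℕ) < j + 1) =
        insert kj (Finset.univ.filter (fun k : Fin d => (k : ℕ) < j)) := by
      ext k
      simp only [Finset.mem_filter, Finset.mem_insert, Finset.mem_univ, true_and]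
      constructor
      · intro h
        rcases Nat.lt_succ_iff_lt_or_eq.mp h with h | h
        · exact Or.inr h
        · exact Or.inl (Fin.ext h)
      · rintro (rfl | h)
        · exact Nat.lt_succ_self _
        · exact Nat.lt_succ_of_lt h
    have hnotmem : kj ∉ Finset.univ.filter (fun k : Fin d => (k : ℕ) < j) := by
      simp [hkj]
    have hterm : ∀ v : W kj, Mlt Pstar (j + 1) (Function.update w kj v) =
        (∏ k ∈ Finset.univ.filter (fun k : Fin d => (k : ℕ) < j), qf (ℓ k) (lam k) k w) *
          qf (ℓ kj) (lam kj) kj (Function.update w kj v) := by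
      intro v
      rw [ih _ _ (by omega), hins, Finset.prod_insert hnotmem]
      rw [Finset.prod_congr rfl (fun k hk => hupd v k (Finset.mem_filter.mp hk).2)]
      ring
    rw [Finset.sum_congr rfl (fun v _ => hterm v), ← Finset.mul_sum, sum_qf w, mul_one]

lemma Mlt_Pstar_pos
    (hdep : ∀ (k : Fin d) (w w' : (i : Fin d) → W i),
      (∀ i ≤ k, w i = w' i) → ℓ k w = ℓ k w')
    {Pstar : ((i : Fin d) → W i) → ℝ}
    (hPstar : ∀ w, Pstar w = ∏ k, qf (ℓ k) (lam k) k w)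
    (j : ℕ) (w : (i : Fin d) → W i) : 0 < Mlt Pstar j w := by
  rw [Mlt_Pstar hdep hPstar]
  exact Finset.prod_pos (fun k _ => qf_pos w)

lemma Mlt_Pstar_succ
    (hdep : ∀ (k : Fin d) (w w' : (i : Fin d) → W i),
      (∀ i ≤ k, w i = w' i) → ℓ k w = ℓ k w')
    {Pstar : ((i : Fin d) → W i) → ℝ}
    (hPstar : ∀ w, Pstar w = ∏ k, qf (ℓ k) (lam k) k w)
    (k : Fin d) (w : (i : Fin d) → W i) :
    Mlt Pstar ((k : ℕ) + 1) w = Mlt Pstar (k : ℕ) w * qf (ℓ k) (lam k) k w := by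
  rw [Mlt_Pstar hdep hPstar, Mlt_Pstar hdep hPstar]
  have hins : Finset.univ.filter (fun k' : Fin d => (k' : ℕ) < (k : ℕ) + 1) =
      insert k (Finset.univ.filter (fun k' : Fin d => (k' : ℕ) < (k : ℕ))) := by
    ext k'
    simp only [Finset.mem_filter, Finset.mem_insert, Finset.mem_univ, true_and]
    constructor
    · intro h
      rcases Nat.lt_succ_iff_lt_or_eq.mp h with h | h
      · exact Or.inr h
      · exact Or.inl (Fin.ext h)
    · rintro (rfl | h)
      · exact Nat.lt_succ_self _
      · exact Nat.lt_succ_of_lt h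
  have hnotmem : k ∉ Finset.univ.filter (fun k' : Fin d => (k' : ℕ) < (k : ℕ)) := by simp
  rw [hins, Finset.prod_insert hnotmem]
  ring

/-- The conditional relative entropy term vanishes at the Gibbs measure. -/
lemma Tk_zero
    (hdep : ∀ (k : Fin d) (w w' : (i : Fin d) → W i),
      (∀ i ≤ k, w i = w' i) → ℓ k w = ℓ k w')
    {Pstar : ((i : Fin d) → W i) → ℝ}
    (hPstar : ∀ w, Pstar w = ∏ k, qf (ℓ k) (lam k) k w)
    (k : Fin d) :
    ∑ w, Pstar w * (Real.log (Mlt Pstar ((k : ℕ) + 1) w) - Real.log (Mlt Pstar (k : ℕ) w)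
      - Real.log (qf (ℓ k) (lam k) k w)) = 0 := by
  apply Finset.sum_eq_zero
  intro w _
  have h1 : Real.log (Mlt Pstar ((k : ℕ) + 1) w)
      = Real.log (Mlt Pstar (k : ℕ) w) + Real.log (qf (ℓ k) (lam k) k w) := by
    rw [Mlt_Pstar_succ hdep hPstar k w,
      Real.log_mul (ne_of_gt (Mlt_Pstar_pos hdep hPstar _ _)) (ne_of_gt (qf_pos w))]
  rw [h1]
  ring_nf


/-- Decomposition of the entropic functional into per-level relative-entropy terms plus a
constant. -/
lemma F_decomp
    (hpos : ∀ k, 0 < lam k)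
    (gap : Fin d → ℝ)
    (hgap : ∀ k : Fin d,
      gap k = lam k - (if h : (k : ℕ) + 1 < d then lam ⟨(k : ℕ) + 1, h⟩ else 0))
    (elll : ((i : Fin d) → W i) → ℝ)
    (helll : ∀ w, elll w = ∑ k, (ℓ k w + lam k *
      Real.log ((1 / (Fintype.card (W k) : ℝ)) * Zf (ℓ k) (lam k) k w)))
    (Q : ((i : Fin d) → W i) → ℝ) (hQ1 : ∑ w, Q w = 1) :
    ∑ w, Q w * elll w
        - ∑ k : Fin d, gap k * (-∑ w, Q w * Real.log (Mlt Q ((k : ℕ) + 1) w))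
      = (∑ k : Fin d, lam k * ∑ w, Q w *
          (Real.log (Mlt Q ((k : ℕ) + 1) w) - Real.log (Mlt Q (k : ℕ) w)
            - Real.log (qf (ℓ k) (lam k) k w)))
        - ∑ k : Fin d, lam k * Real.log (Fintype.card (W k)) := by
  have hcard : ∀ k : Fin d, (0 : ℝ) < (Fintype.card (W k) : ℝ) := by
    intro k
    exact_mod_cast Fintype.card_pos
  -- pointwise identity for the loss part
  have hpt : ∀ (k : Fin d) (w : (i : Fin d) → W i),
      ℓ k w + lam k * Real.log ((1 / (Fintype.card (W k) : ℝ)) * Zf (ℓ k) (lam k) k w)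
        = lam k * (-Real.log (qf (ℓ k) (lam k) k w) - Real.log (Fintype.card (W k))) := by
    intro k w
    have hq : Real.log (qf (ℓ k) (lam k) k w)
        = -ℓ k w / lam k - Real.log (Zf (ℓ k) (lam k) k w) := by
      unfold qf
      rw [Real.log_div (Real.exp_ne_zero _) (ne_of_gt (Zf_pos w)), Real.log_exp]
    have hZ : Real.log ((1 / (Fintype.card (W k) : ℝ)) * Zf (ℓ k) (lam k) k w)
        = -Real.log (Fintype.card (W k)) + Real.log (Zf (ℓ k) (lam k) k w) := by
      rw [Real.log_mul (by positivity) (ne_of_gt (Zf_pos w)), one_div, Real.log_inv]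
    rw [hq, hZ]
    have hlk : lam k ≠ 0 := ne_of_gt (hpos k)
    field_simp
    ring
  -- loss part
  have hE : ∑ w, Q w * elll w
      = ∑ k : Fin d, lam k * ((∑ w, Q w * (-Real.log (qf (ℓ k) (lam k) k w)))
          - Real.log (Fintype.card (W k))) := by
    rw [Finset.sum_congr rfl (fun w _ => by
      rw [helll w, Finset.mul_sum,
        Finset.sum_congr rfl (fun k _ => by rw [hpt k w])])]
    rw [Finset.sum_comm]
    refine Finset.sum_congr rfl (fun k _ => ?_)
    rw [Finset.sum_congr rfl (fun w _ =>
      show Q w * (lam k * (-Real.log (qf (ℓ k) (lam k) k w)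
          - Real.log (Fintype.card (W k))))
        = lam k * (Q w * (-Real.log (qf (ℓ k) (lam k) k w)))
          - (lam k * Real.log (Fintype.card (W k))) * Q w from by ring)]
    rw [Finset.sum_sub_distrib, ← Finset.mul_sum, ← Finset.mul_sum, hQ1]
    ring
  rw [hE]
  -- entropy part: Abel summation
  set HH : ℕ → ℝ := fun j => -∑ w, Q w * Real.log (Mlt Q j w) with hHH
  have hHH0 : HH 0 = 0 := by
    simp only [hHH]
    rw [Finset.sum_congr rfl (fun w _ => by
      unfold Mlt
      rw [C_zero, hQ1, Real.log_one, mul_zero])]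
    simp
  set Lm : ℕ → ℝ := fun n => if h : n < d then lam ⟨n, h⟩ else 0 with hLm
  have hLmd : Lm d = 0 := by simp [hLm]
  have hL1 : ∀ k : Fin d, gap k = Lm (k : ℕ) - Lm ((k : ℕ) + 1) := by
    intro k
    rw [hgap k]
    have : Lm (k : ℕ) = lam k := by simp [hLm, k.isLt]
    rw [this]
  have hL2 : ∀ k : Fin d, lam k = Lm (k : ℕ) := by
    intro k
    simp [hLm, k.isLt]
  have hAbel : ∑ k : Fin d, gap k * (-∑ w, Q w * Real.log (Mlt Q ((k : ℕ) + 1) w))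
      = ∑ k : Fin d, lam k * (HH ((k : ℕ) + 1) - HH (k : ℕ)) := by
    have lhs : ∑ k : Fin d, gap k * (-∑ w, Q w * Real.log (Mlt Q ((k : ℕ) + 1) w))
        = ∑ n ∈ Finset.range d, (Lm n - Lm (n + 1)) * HH (n + 1) := by
      rw [Finset.sum_congr rfl (fun k _ => by rw [hL1 k])]
      exact Fin.sum_univ_eq_sum_range (fun n => (Lm n - Lm (n + 1)) * HH (n + 1)) d
    have rhs : ∑ k : Fin d, lam k * (HH ((k : ℕ) + 1) - HH (k : ℕ))
        = ∑ n ∈ Finset.range d, Lm n * (HH (n + 1) - HH n) := by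
      rw [Finset.sum_congr rfl (fun k _ => by rw [hL2 k])]
      exact Fin.sum_univ_eq_sum_range (fun n => Lm n * (HH (n + 1) - HH n)) d
    rw [lhs, rhs]
    have tele : ∑ n ∈ Finset.range d, (Lm n * HH n - Lm (n + 1) * HH (n + 1))
        = Lm 0 * HH 0 - Lm d * HH d :=
      Finset.sum_range_sub' (fun n => Lm n * HH n) d
    have tele0 : ∑ n ∈ Finset.range d, (Lm n * HH n - Lm (n + 1) * HH (n + 1)) = 0 := by
      rw [tele, hHH0, hLmd]
      ring
    have expand : ∀ n ∈ Finset.range d, (Lm n - Lm (n + 1)) * HH (n + 1)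
        = Lm n * (HH (n + 1) - HH n) + (Lm n * HH n - Lm (n + 1) * HH (n + 1)) := by
      intro n _
      ring
    rw [Finset.sum_congr rfl expand, Finset.sum_add_distrib, tele0, add_zero]
  rw [hAbel]
  -- combine
  have hT : ∀ k : Fin d, ∑ w, Q w * (Real.log (Mlt Q ((k : ℕ) + 1) w)
        - Real.log (Mlt Q (k : ℕ) w) - Real.log (qf (ℓ k) (lam k) k w))
      = (∑ w, Q w * (-Real.log (qf (ℓ k) (lam k) k w)))
        - (HH ((k : ℕ) + 1) - HH (k : ℕ)) := by
    intro k
    simp only [hHH]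
    rw [Finset.sum_congr rfl (fun w _ =>
      show Q w * (Real.log (Mlt Q ((k : ℕ) + 1) w) - Real.log (Mlt Q (k : ℕ) w)
            - Real.log (qf (ℓ k) (lam k) k w))
          = Q w * (-Real.log (qf (ℓ k) (lam k) k w))
            - ((-(Q w * Real.log (Mlt Q ((k : ℕ) + 1) w)))
              - (-(Q w * Real.log (Mlt Q (k : ℕ) w)))) from by ring)]
    rw [Finset.sum_sub_distrib, Finset.sum_sub_distrib, Finset.sum_neg_distrib,
      Finset.sum_neg_distrib]
  rw [show (∑ k : Fin d, lam k * ∑ w, Q w *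
        (Real.log (Mlt Q ((k : ℕ) + 1) w) - Real.log (Mlt Q (k : ℕ) w)
          - Real.log (qf (ℓ k) (lam k) k w)))
      = ∑ k : Fin d, lam k * ((∑ w, Q w * (-Real.log (qf (ℓ k) (lam k) k w)))
          - (HH ((k : ℕ) + 1) - HH (k : ℕ))) from
    Finset.sum_congr rfl (fun k _ => by rw [hT k])]
  rw [← Finset.sum_sub_distrib, ← Finset.sum_sub_distrib]
  refine Finset.sum_congr rfl (fun k _ => ?_)
  ring


/-- Per-sample variational principle: the Gibbs measure minimizes the functional. -/
lemma key
    (hdep : ∀ (k : Fin d) (w w' : (i : Fin d) → W i),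
      (∀ i ≤ k, w i = w' i) → ℓ k w = ℓ k w')
    (hpos : ∀ k, 0 < lam k)
    (gap : Fin d → ℝ)
    (hgap : ∀ k : Fin d,
      gap k = lam k - (if h : (k : ℕ) + 1 < d then lam ⟨(k : ℕ) + 1, h⟩ else 0))
    (Pstar : ((i : Fin d) → W i) → ℝ)
    (hPstar : ∀ w, Pstar w = ∏ k, qf (ℓ k) (lam k) k w)
    (elll : ((i : Fin d) → W i) → ℝ)
    (helll : ∀ w, elll w = ∑ k, (ℓ k w + lam k *
      Real.log ((1 / (Fintype.card (W k) : ℝ)) * Zf (ℓ k) (lam k) k w)))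
    (P : ((i : Fin d) → W i) → ℝ) (hP0 : ∀ w, 0 ≤ P w) (hP1 : ∑ w, P w = 1) :
    ∑ w, Pstar w * elll w
        - ∑ k : Fin d, gap k * (-∑ w, Pstar w * Real.log (Mlt Pstar ((k : ℕ) + 1) w))
      ≤ ∑ w, P w * elll w
        - ∑ k : Fin d, gap k * (-∑ w, P w * Real.log (Mlt P ((k : ℕ) + 1) w)) := by
  have hΩ : Nonempty ((i : Fin d) → W i) := ⟨fun i => Classical.arbitrary _⟩
  obtain ⟨w₀⟩ := hΩ
  have hPs1 : ∑ w, Pstar w = 1 := by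
    have h0 := Mlt_Pstar hdep hPstar 0 w₀
    unfold Mlt at h0
    rw [C_zero] at h0
    rw [h0, Finset.filter_false_of_mem (fun k _ => by omega), Finset.prod_empty]
  rw [F_decomp hpos gap hgap elll helll Pstar hPs1,
    F_decomp hpos gap hgap elll helll P hP1]
  apply sub_le_sub_right
  have hl : ∑ k : Fin d, lam k * ∑ w, Pstar w *
      (Real.log (Mlt Pstar ((k : ℕ) + 1) w) - Real.log (Mlt Pstar (k : ℕ) w)
        - Real.log (qf (ℓ k) (lam k) k w)) = 0 := by
    apply Finset.sum_eq_zero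
    intro k _
    rw [Tk_zero hdep hPstar k, mul_zero]
  rw [hl]
  apply Finset.sum_nonneg
  intro k _
  exact mul_nonneg (le_of_lt (hpos k))
    (Tk_nonneg P hP0 (fun w w' h => hdep k w w' h))

end Gibbs

end GibbsAux

/-- **conditional self-similar Gibbs measure minimizes the multiscale entropic
functional.** With finite parameter sets `W 0, …, W (d-1)`, a finitely-valued sample `S ~ P_S`,
per-level losses `ℓ k (·, s)` depending only on the first `k+1` coordinates, and temperatures
`λ₁ ≥ ⋯ ≥ λ_d > 0` (`λ_{d+1} = 0`), the product of conditional Gibbs measures `P*_{W|S}`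
attains the minimum over all conditional distributions `P_{W|S}` of
`E[ℓ^{(λ)}(W,S)] - Σ_k (λ_k - λ_{k+1})·H(W₁^k | S)`. -/
theorem conditional_self_similar_gibbs_minimizer
    (d : ℕ) (hd : 1 ≤ d) (W : Fin d → Type*)
    [∀ k, Fintype (W k)] [∀ k, Nonempty (W k)] [∀ k, DecidableEq (W k)]
    (S : Type*) [Fintype S]
    (PS : S → ℝ) (hPS0 : ∀ s, 0 ≤ PS s) (hPS1 : ∑ s, PS s = 1)
    (ℓ : (k : Fin d) → ((i : Fin d) → W i) → S → ℝ)
    (hdep : ∀ (k : Fin d) (w w' : (i : Fin d) → W i) (s : S),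
      (∀ i ≤ k, w i = w' i) → ℓ k w s = ℓ k w' s)
    (lam : Fin d → ℝ) (hpos : ∀ k, 0 < lam k)
    (hmono : ∀ j k : Fin d, j ≤ k → lam k ≤ lam j)
    (gap : Fin d → ℝ)
    (hgap : ∀ k : Fin d,
      gap k = lam k - (if h : (k : ℕ) + 1 < d then lam ⟨(k : ℕ) + 1, h⟩ else 0))
    (Pstar : S → ((i : Fin d) → W i) → ℝ)
    (hPstar : ∀ s w, Pstar s w = ∏ k, (Real.exp (-ℓ k w s / lam k) /
        ∑ v : W k, Real.exp (-ℓ k (Function.update w k v) s / lam k)))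
    (lbar : (k : Fin d) → ((i : Fin d) → W i) → S → ℝ)
    (hlbar : ∀ k w s, lbar k w s = -lam k * Real.log ((1 / (Fintype.card (W k) : ℝ)) *
        ∑ v : W k, Real.exp (-ℓ k (Function.update w k v) s / lam k)))
    (elllam : ((i : Fin d) → W i) → S → ℝ)
    (helllam : ∀ w s, elllam w s = ∑ k, (ℓ k w s - lbar k w s))
    (Hpre : (((i : Fin d) → W i) → ℝ) → Fin d → ℝ)
    (hHpre : ∀ P k, Hpre P k = -∑ w : (i : Fin d) → W i, P w *
        Real.log (∑ w' ∈ Finset.univ.filter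
          (fun w' : (i : Fin d) → W i => ∀ i ≤ k, w' i = w i), P w'))
    (P : S → ((i : Fin d) → W i) → ℝ)
    (hP0 : ∀ s w, 0 ≤ P s w) (hP1 : ∀ s, ∑ w, P s w = 1) :
    (∑ s, PS s * ∑ w, Pstar s w * elllam w s)
        - ∑ k, gap k * ∑ s, PS s * Hpre (Pstar s) k
      ≤ (∑ s, PS s * ∑ w, P s w * elllam w s)
        - ∑ k, gap k * ∑ s, PS s * Hpre (P s) k := by
  classical
  -- rewrite `Hpre` in terms of `Mlt`
  have hH : ∀ (Q : ((i : Fin d) → W i) → ℝ) (k : Fin d),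
      Hpre Q k = -∑ w, Q w * Real.log (GibbsAux.Mlt Q ((k : ℕ) + 1) w) := by
    intro Q k
    rw [hHpre]
    refine congrArg Neg.neg (Finset.sum_congr rfl (fun w _ => ?_))
    congr 2
    unfold GibbsAux.Mlt GibbsAux.C
    apply Finset.sum_congr _ (fun _ _ => rfl)
    apply Finset.filter_congr
    intro w' _
    constructor
    · intro h i hi
      exact h i (Fin.le_def.mpr (Nat.lt_succ_iff.mp hi))
    · intro h i hi
      exact h i (Nat.lt_succ_iff.mpr (Fin.le_def.mp hi))
  -- reorganize both sides as a single sum over s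
  have reorg : ∀ (Q : S → ((i : Fin d) → W i) → ℝ),
      (∑ s, PS s * ∑ w, Q s w * elllam w s) - ∑ k, gap k * ∑ s, PS s * Hpre (Q s) k
      = ∑ s, PS s * ((∑ w, Q s w * elllam w s) - ∑ k, gap k * Hpre (Q s) k) := by
    intro Q
    have h1 : ∑ k, gap k * ∑ s, PS s * Hpre (Q s) k
        = ∑ s, PS s * ∑ k, gap k * Hpre (Q s) k := by
      simp only [Finset.mul_sum]
      rw [Finset.sum_comm]
      exact Finset.sum_congr rfl (fun s _ => Finset.sum_congr rfl (fun k _ => by ring))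
    rw [h1, ← Finset.sum_sub_distrib]
    exact Finset.sum_congr rfl (fun s _ => by ring)
  rw [reorg Pstar, reorg P]
  apply Finset.sum_le_sum
  intro s _
  apply mul_le_mul_of_nonneg_left _ (hPS0 s)
  -- fix the sample s and apply the key lemma
  have hkey := GibbsAux.key (ℓ := fun k w => ℓ k w s) (lam := lam)
    (fun k w w' h => hdep k w w' s h) hpos gap hgap (Pstar s)
    (fun w => by rw [hPstar s w]; rfl)
    (fun w => elllam w s)
    (fun w => by
      show elllam w s = ∑ k, (ℓ k w s + lam k * Real.log ((1 / (Fintype.card (W k) : ℝ)) *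
        GibbsAux.Zf (fun u => ℓ k u s) (lam k) k w))
      rw [helllam]
      refine Finset.sum_congr rfl (fun k _ => ?_)
      rw [hlbar]
      unfold GibbsAux.Zf
      ring)
    (P s) (hP0 s) (hP1 s)
  simp only [hH]
  exact hkey
end

section
/- Let M₁, R > 0 and let Ψ : ℝ → ℝ be φ₁-Lipschitz and φ₂-smooth with support D_Ψ = (a₁, a₂) ⊆ (−M₁R, M₁R), 0 ∈ D_Ψ, and Ψ(0) = 0. Let τ ≥ 2 be an integer, set b_j := (−1 + 2j/τ)·M₁R for 1 ≤ j ≤ τ, and set w^{(j)} := (2M₁R/τ)·Ψ'(b_j) if b_j ∈ D_Ψ and w^{(j)} := 0 otherwise. Then for all x ∈ D_Ψ, | ∫_{a₁}^{a₂} Ψ'(b)·H(x − b) db − Σ_{j=1}^τ w^{(j)}·H(x − b_j) | ≤ 2·M₁²·R²·φ₂/τ, where H is the Heaviside step function (H(t) = 1 for t ≥ 0, H(t) = 0 for t < 0). -/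
/-!
With `δ = 2M₁R/τ` and `c_j = -M₁R + jδ`, the integral equals `Ψ x` and the network computes the
right-endpoint Riemann sum `δ ∑_{c_j ≤ x} Ψ' c_j` (the weights dropped outside the support are
harmless since `Ψ'` vanishes there too). For the `φ₂`-Lipschitz `Ψ'` the trapezoid rule errs by at
most `φ₂δ²/2` per cell; what remains — the half-weight `δΨ'(c_N)/2` separating trapezoid and
Riemann sums, and the partial cell `[c_N, x]` — is controlled by `|Ψ'(t)| ≤ φ₂ (a₂ - t)`, at most
`φ₂δ²/2` for each of the `τ - N` cells between `c_N` and `M₁R ≥ a₂`. In total the error is at most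
`τ φ₂ δ²/2 = 2M₁²R²φ₂/τ`.
-/

noncomputable def heaviside (t : ℝ) : ℝ := if 0 ≤ t then 1 else 0

open Set

theorem eq_zero_of_hasDerivAt_of_notMem_Ioo {F f : ℝ → ℝ} {a b t : ℝ}
    (hF : ∀ t, HasDerivAt F (f t) t) (hf : Continuous f) (hF0 : ∀ t ∉ Ioo a b, F t = 0)
    (ht : t ∉ Ioo a b) : f t = 0 := by
  have hf_outside : ∀ s ∈ Iio a ∪ Ioi b, f s = 0 := by
    intro s hs
    have hF_nhds : F =ᶠ[nhds s] fun _ => 0 := by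
      refine Filter.eventually_of_mem ((isOpen_Iio.union isOpen_Ioi).mem_nhds hs)
        fun u hu => hF0 u ?_
      rintro ⟨hau, hub⟩
      rcases hu with hu | hu
      · exact lt_asymm hau hu
      · exact lt_asymm hub hu
    exact (hF s).unique ((hasDerivAt_const s 0).congr_of_eventuallyEq hF_nhds)
  have hclosure : t ∈ closure (Iio a ∪ Ioi b) := by
    rw [mem_Ioo, not_and_or, not_lt, not_lt] at ht
    rwa [closure_union, closure_Iio, closure_Ioi]
  exact closure_minimal hf_outside (isClosed_eq hf continuous_const) hclosure

theorem integral_mul_heaviside_sub {g : ℝ → ℝ} {a b x : ℝ} (hx : x ∈ Icc a b) :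
    ∫ t in a..b, g t * heaviside (x - t) = ∫ t in a..x, g t := by
  have hind : (fun t => g t * heaviside (x - t)) = {t | t ≤ x}.indicator g := by
    ext t
    simp [heaviside, indicator, sub_nonneg]
  rw [hind, intervalIntegral.integral_indicator hx]

theorem sum_Icc_mul_heaviside_sub {g b : ℕ → ℝ} {x : ℝ} {N n : ℕ}
    (hb : ∀ j, b j ≤ x ↔ j ≤ N) (hNn : N ≤ n) :
    ∑ j ∈ Finset.Icc 1 n, g j * heaviside (x - b j) = ∑ j ∈ Finset.Icc 1 N, g j := by
  have hH : ∀ j, heaviside (x - b j) = if j ≤ N then 1 else 0 := by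
    intro j
    simp [heaviside, sub_nonneg, hb]
  simp_rw [hH, mul_ite, mul_one, mul_zero, Finset.sum_ite, Finset.sum_const_zero, add_zero]
  congr 1
  ext j
  simp only [Finset.mem_filter, Finset.mem_Icc]
  omega

theorem exists_forall_add_mul_le_iff {c₀ δ x : ℝ} (hδ : 0 < δ) (hx : c₀ ≤ x) :
    ∃ N : ℕ, ∀ j : ℕ, c₀ + j * δ ≤ x ↔ j ≤ N := by
  refine ⟨⌊(x - c₀) / δ⌋₊, fun j => ?_⟩
  rw [Nat.le_floor_iff (div_nonneg (sub_nonneg.2 hx) hδ.le), le_div_iff₀ hδ]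
  constructor <;> intro h <;> linarith

section Lipschitz

variable {F f : ℝ → ℝ} {K : NNReal}

theorem abs_sub_average_le_of_lipschitzWith (hf : LipschitzWith K f) {p q t : ℝ}
    (hpt : p ≤ t) (htq : t ≤ q) : |f t - (f p + f q) / 2| ≤ K * (q - p) / 2 := by
  have hp : |f t - f p| ≤ K * (t - p) := by
    simpa [Real.dist_eq, abs_of_nonneg (sub_nonneg.2 hpt)] using hf.dist_le_mul t p
  have hq : |f t - f q| ≤ K * (q - t) := by
    simpa [Real.dist_eq, abs_of_nonpos (sub_nonpos.2 htq)] using hf.dist_le_mul t q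
  rw [abs_le] at hp hq ⊢
  constructor <;> linarith [hp.1, hp.2, hq.1, hq.2]

theorem abs_sub_sub_mul_average_le (hf : LipschitzWith K f) (hF : ∀ t, HasDerivAt F (f t) t)
    {p q r : ℝ} (hpr : p ≤ r) (hrq : r ≤ q) :
    |F r - F p - (r - p) * ((f p + f q) / 2)| ≤ K * (q - p) / 2 * (r - p) := by
  have hG : ∀ t ∈ Icc p r, HasDerivWithinAt (fun t => F t - (t - p) * ((f p + f q) / 2))
      (f t - (f p + f q) / 2) (Icc p r) t := fun t _ =>
    ((hF t).sub (((hasDerivAt_id' t).sub_const p).mul_const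
      ((f p + f q) / 2))).hasDerivWithinAt.congr_deriv (by ring)
  rw [sub_right_comm]
  simpa using norm_image_sub_le_of_norm_deriv_le_segment' hG
    (fun t ht => abs_sub_average_le_of_lipschitzWith hf ht.1 (ht.2.le.trans hrq)) r ⟨hpr, le_rfl⟩

theorem abs_trapezoid_sum_error_le (hf : LipschitzWith K f) (hF : ∀ t, HasDerivAt F (f t) t)
    {c₀ δ : ℝ} (hδ : 0 ≤ δ) (n : ℕ) :
    |F (c₀ + n * δ) - F c₀ - δ * ∑ j ∈ Finset.Icc 1 n, f (c₀ + j * δ)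
        + δ * (f (c₀ + n * δ) - f c₀) / 2| ≤ n * (K * δ ^ 2 / 2) := by
  induction n with
  | zero => simp
  | succ n ih =>
    have hcell := abs_sub_sub_mul_average_le hf hF
      (by linarith : c₀ + n * δ ≤ c₀ + (n + 1) * δ) le_rfl
    rw [show c₀ + (n + 1) * δ - (c₀ + n * δ) = δ by ring] at hcell
    rw [Finset.sum_Icc_succ_top (by omega)]
    push_cast
    calc _ = |(F (c₀ + n * δ) - F c₀ - δ * ∑ j ∈ Finset.Icc 1 n, f (c₀ + j * δ)
              + δ * (f (c₀ + n * δ) - f c₀) / 2)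
            + (F (c₀ + (n + 1) * δ) - F (c₀ + n * δ)
              - δ * ((f (c₀ + n * δ) + f (c₀ + (n + 1) * δ)) / 2))| := by ring_nf
      _ ≤ _ := (abs_add_le _ _).trans (add_le_add ih hcell)
      _ = (n + 1) * (K * δ ^ 2 / 2) := by ring

theorem abs_sub_riemann_sum_le (hf : LipschitzWith K f) (hF : ∀ t, HasDerivAt F (f t) t)
    {c₀ δ x a : ℝ} {N n : ℕ} (hδ : 0 ≤ δ) (hNx : c₀ + N * δ ≤ x) (hxN : x ≤ c₀ + (N + 1) * δ)
    (hxa : x ≤ a) (han : a ≤ c₀ + n * δ) (hfc₀ : f c₀ = 0) (hfa : f a = 0) :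
    |F x - F c₀ - δ * ∑ j ∈ Finset.Icc 1 N, f (c₀ + j * δ)| ≤ n * (K * δ ^ 2 / 2) := by
  set c := c₀ + N * δ
  have hgrid := abs_trapezoid_sum_error_le hf hF hδ N (c₀ := c₀)
  have htail := abs_sub_sub_mul_average_le hf hF hNx hxa
  have hfc : |f c| ≤ K * (a - c) := by
    simpa [hfa, Real.dist_eq, abs_of_nonpos (sub_nonpos.2 (hNx.trans hxa))] using
      hf.dist_le_mul c a
  have hsplit : F x - F c₀ - δ * ∑ j ∈ Finset.Icc 1 N, f (c₀ + j * δ) =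
      (F c - F c₀ - δ * ∑ j ∈ Finset.Icc 1 N, f (c₀ + j * δ) + δ * (f c - f c₀) / 2)
        + (F x - F c - (x - c) * ((f c + f a) / 2)) - (δ - (x - c)) * f c / 2 := by
    rw [hfc₀, hfa]; ring
  have hδx : 0 ≤ δ - (x - c) := by linarith
  have hac : a - c ≤ (n - N) * δ := by linarith
  rw [hsplit]
  calc _ ≤ N * (K * δ ^ 2 / 2) + K * (a - c) / 2 * (x - c) + (δ - (x - c)) * (K * (a - c)) / 2 := by
        refine (abs_sub _ _).trans (add_le_add ((abs_add_le _ _).trans (add_le_add hgrid htail)) ?_)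
        rw [abs_div, abs_mul, abs_of_nonneg hδx, abs_two]
        gcongr
    _ = N * (K * δ ^ 2 / 2) + K * δ * (a - c) / 2 := by ring
    _ ≤ N * (K * δ ^ 2 / 2) + K * δ * ((n - N) * δ) / 2 := by gcongr
    _ = n * (K * δ ^ 2 / 2) := by ring

theorem abs_integral_mul_heaviside_sub_sum_le (hf : LipschitzWith K f)
    (hF : ∀ t, HasDerivAt F (f t) t) {c₀ δ a₁ a₂ x : ℝ} {n : ℕ} (hδ : 0 < δ) (hc₀ : c₀ ≤ a₁)
    (ha₂ : a₂ ≤ c₀ + n * δ) (hF0 : ∀ t ∉ Ioo a₁ a₂, F t = 0) (hx : x ∈ Ioo a₁ a₂) :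
    |(∫ t in a₁..a₂, f t * heaviside (x - t)) -
        ∑ j ∈ Finset.Icc 1 n, (if a₁ < c₀ + j * δ ∧ c₀ + j * δ < a₂ then δ * f (c₀ + j * δ) else 0)
          * heaviside (x - (c₀ + j * δ))|
      ≤ n * (K * δ ^ 2 / 2) := by
  have hf0 : ∀ t ∉ Ioo a₁ a₂, f t = 0 := fun t =>
    eq_zero_of_hasDerivAt_of_notMem_Ioo hF hf.continuous hF0
  have hF_left : ∀ t ≤ a₁, F t = 0 := fun t ht => hF0 t fun h => (ht.trans_lt h.1).false
  have hweight : ∀ c, (if a₁ < c ∧ c < a₂ then δ * f c else 0) = δ * f c := fun c => by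
    split_ifs with hc
    · rfl
    · rw [hf0 c hc, mul_zero]
  obtain ⟨N, hN⟩ := exists_forall_add_mul_le_iff hδ (hc₀.trans hx.1.le)
  have hNn : N < n := by
    by_contra! h
    linarith [(hN n).2 h, hx.2]
  have hxN : x ≤ c₀ + (N + 1) * δ := by
    have := mt (hN (N + 1)).1 (by omega)
    push_cast at this
    exact (not_le.1 this).le
  have hbound := abs_sub_riemann_sum_le hf hF hδ.le ((hN N).2 le_rfl) hxN hx.2.le ha₂
    (hf0 _ fun h => (hc₀.trans_lt h.1).false) (hf0 _ fun h => h.2.false)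
  rw [hF_left c₀ hc₀, sub_zero] at hbound
  simp_rw [hweight]
  rwa [integral_mul_heaviside_sub ⟨hx.1.le, hx.2.le⟩,
    intervalIntegral.integral_eq_sub_of_hasDerivAt (fun t _ => hF t)
      (hf.continuous.intervalIntegrable _ _), hF_left a₁ le_rfl, sub_zero,
    sum_Icc_mul_heaviside_sub (g := fun j => δ * f (c₀ + j * δ)) hN hNn.le, ← Finset.mul_sum]

end Lipschitz

theorem riemann_sum_network_approximation_general
    (M₁ R φ₂ a₁ a₂ : ℝ)
    (Ψ Ψ' : ℝ → ℝ)
    (hΨ' : ∀ x : ℝ, HasDerivAt Ψ (Ψ' x) x)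
    (hΨ'_lip : ∀ x y : ℝ, |Ψ' x - Ψ' y| ≤ φ₂ * |x - y|)
    (hsub : Set.Ioo a₁ a₂ ⊆ Set.Ioo (-(M₁ * R)) (M₁ * R))
    (hsupp : ∀ x : ℝ, x ∉ Set.Ioo a₁ a₂ → Ψ x = 0)
    (τ : ℕ) (hτ : 2 ≤ τ)
    (b : ℕ → ℝ) (hb : ∀ j, b j = (-1 + 2 * (j : ℝ) / (τ : ℝ)) * (M₁ * R))
    (w : ℕ → ℝ)
    (hw : ∀ j, w j = if a₁ < b j ∧ b j < a₂ then (2 * M₁ * R / (τ : ℝ)) * Ψ' (b j) else 0) :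
    ∀ x ∈ Set.Ioo a₁ a₂,
      |(∫ t in a₁..a₂, Ψ' t * heaviside (x - t)) -
          ∑ j ∈ Finset.Icc 1 τ, w j * heaviside (x - b j)|
        ≤ 2 * M₁ ^ 2 * R ^ 2 * φ₂ / (τ : ℝ) := by
  intro x hx
  have hτ₀ : (0 : ℝ) < τ := Nat.cast_pos.2 (by omega)
  have hMR : 0 < M₁ * R := by linarith [(hsub hx).1, (hsub hx).2]
  obtain ⟨ha₁, ha₂⟩ := (Ioo_subset_Ioo_iff (hx.1.trans hx.2)).1 hsub
  have hφ₂ : 0 ≤ φ₂ := by simpa using (abs_nonneg _).trans (hΨ'_lip 0 1)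
  have hlip : LipschitzWith (Real.toNNReal φ₂) Ψ' := .of_dist_le_mul fun s t => by
    simpa [Real.dist_eq, hφ₂] using hΨ'_lip s t
  set δ := 2 * M₁ * R / τ with hδ_def
  have hτδ : τ * δ = 2 * (M₁ * R) := by rw [hδ_def]; field_simp
  have hbj : ∀ j, b j = -(M₁ * R) + j * δ := fun j => by rw [hb, hδ_def]; field_simp
  have hδ : 0 < δ := div_pos (by linarith) hτ₀
  have hbound := abs_integral_mul_heaviside_sub_sum_le hlip hΨ' hδ ha₁ (n := τ) (by linarith)
    hsupp hx
  simp_rw [hw, hbj]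
  calc _ ≤ _ := hbound
    _ = 2 * M₁ ^ 2 * R ^ 2 * φ₂ / τ := by
      rw [Real.coe_toNNReal _ hφ₂, hδ_def]; field_simp

/-- **Riemann-sum approximation by a two-layer Heaviside network.** Let `Ψ` be
`φ₁`-Lipschitz and `φ₂`-smooth, vanishing outside its support `(a₁, a₂) ⊆ (-M₁R, M₁R)` with
`0 ∈ (a₁, a₂)` and `Ψ(0) = 0`. With breakpoints `b_j = (-1 + 2j/τ)·M₁R` and weights
`w^{(j)} = (2M₁R/τ)·Ψ'(b_j)` for `b_j ∈ (a₁, a₂)` (and `0` otherwise), for all `x ∈ (a₁, a₂)`,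
`|∫_{a₁}^{a₂} Ψ'(b)·H(x-b) db - Σ_{j=1}^τ w^{(j)}·H(x-b_j)| ≤ 2M₁²R²φ₂/τ`. -/
theorem riemann_sum_network_approximation
    (M₁ R φ₁ φ₂ a₁ a₂ : ℝ) (hM₁ : 0 < M₁) (hR : 0 < R)
    (Ψ Ψ' : ℝ → ℝ)
    (hΨ_lip : ∀ x y : ℝ, |Ψ x - Ψ y| ≤ φ₁ * |x - y|)
    (hΨ' : ∀ x : ℝ, HasDerivAt Ψ (Ψ' x) x)
    (hΨ'_lip : ∀ x y : ℝ, |Ψ' x - Ψ' y| ≤ φ₂ * |x - y|)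
    (hsub : Set.Ioo a₁ a₂ ⊆ Set.Ioo (-(M₁ * R)) (M₁ * R))
    (hsupp : ∀ x : ℝ, x ∉ Set.Ioo a₁ a₂ → Ψ x = 0)
    (h0 : 0 ∈ Set.Ioo a₁ a₂) (hΨ0 : Ψ 0 = 0)
    (τ : ℕ) (hτ : 2 ≤ τ)
    (b : ℕ → ℝ) (hb : ∀ j, b j = (-1 + 2 * (j : ℝ) / (τ : ℝ)) * (M₁ * R))
    (w : ℕ → ℝ)
    (hw : ∀ j, w j = if a₁ < b j ∧ b j < a₂ then (2 * M₁ * R / (τ : ℝ)) * Ψ' (b j) else 0) :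
    ∀ x ∈ Set.Ioo a₁ a₂,
      |(∫ t in a₁..a₂, Ψ' t * heaviside (x - t)) -
          ∑ j ∈ Finset.Icc 1 τ, w j * heaviside (x - b j)|
        ≤ 2 * M₁ ^ 2 * R ^ 2 * φ₂ / (τ : ℝ) :=
  riemann_sum_network_approximation_general M₁ R φ₂ a₁ a₂ Ψ Ψ' hΨ' hΨ'_lip hsub hsupp τ hτ b hb w hw
end

section
/- Let M₁, R > 0 and let Ψ : ℝ → ℝ be φ₁-Lipschitz and φ₂-smooth with support D_Ψ = (a₁, a₂) ⊆ (−M₁R, M₁R), 0 ∈ D_Ψ, Ψ(0) = 0. For an integer τ ≥ 2 and precision η > 0, set b_j := (−1 + 2j/τ)·M₁R, w^{(j)} := (2M₁R/τ)·Ψ'(b_j) if b_j ∈ D_Ψ and 0 otherwise, w^{(c)} := Ψ(a₁), and let [·]_η denote rounding to a nearest element of η·ℤ (so |t − [t]_η| ≤ η/2). Define the discretized two-layer network ψ_w^{(τ,η)}(x) := Σ_{j=1}^τ [w^{(j)}]_η·H(x − b_j) + [w^{(c)}]_η, with H the Heaviside step function. Then for all x ∈ D_Ψ, |ψ_w^{(τ,η)}(x)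 − Ψ(x)| ≤ (τ + 1)·η/2 + 2·M₁²·R²·φ₂/τ. -/
/-!
Let `h = 2M₁R/τ` be the grid spacing, `b_k` the last breakpoint at or left of `x` and
`δ = x - b_k ∈ [0, h)`. Since `Ψ` and `Ψ'` vanish at `b_0 = -M₁R` and `Ψ(a₁) = 0`, the unrounded
network at `x` is `∑_{j ≤ k} h Ψ'(b_j)`. With `G(t) = Ψ(t) + δ Ψ'(t)`, the weight `h Ψ'(b_{j+1})`
differs from `G(b_{j+1}) - G(b_j)` by two first-order Taylor remainders, on segments of lengths
`δ` and `h - δ` meeting at `b_j + δ`, hence by at most `φ₂((h - δ)² + δ²)/2 ≤ φ₂h²/2`.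
Telescoping, plus the remainder `Ψ(x) - G(b_k)`, bounds the error by `(k + 1)φ₂h²/2 ≤ 2M₁²R²φ₂/τ`;
rounding the `k + 1 ≤ τ` active weights adds at most `τη/2`.
-/

open Finset Set

section LipschitzDeriv

variable {f f' : ℝ → ℝ} {K : ℝ}

lemma nonneg_of_abs_sub_le_mul_abs (hf' : ∀ s t, |f' s - f' t| ≤ K * |s - t|) : 0 ≤ K := by
  simpa using (abs_nonneg _).trans (hf' 1 0)

lemma abs_sub_sub_mul_le_of_le (hf : ∀ t, HasDerivAt f (f' t) t)
    (hf' : ∀ s t, |f' s - f' t| ≤ K * |s - t|) {u v : ℝ} (huv : u ≤ v) :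
    |f v - f u - (v - u) * f' u| ≤ K * (v - u) ^ 2 / 2 := by
  have hg : ∀ t, HasDerivAt (fun t => f t - f u - (t - u) * f' u) (f' t - f' u) t := fun t => by
    simpa using ((hf t).sub_const (f u)).fun_sub (((hasDerivAt_id' t).sub_const u).mul_const (f' u))
  have hB : ∀ t, HasDerivAt (fun t => K * (t - u) ^ 2 / 2) (K * (t - u)) t := fun t => by
    refine (((((hasDerivAt_id' t).sub_const u).fun_pow 2).const_mul K).div_const 2).congr_deriv ?_
    ring
  refine image_norm_le_of_norm_deriv_right_le_deriv_boundary (a := u) (b := v)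
    (fun t _ => (hg t).continuousAt.continuousWithinAt) (fun t _ => (hg t).hasDerivWithinAt)
    (by simp) hB (fun t ht => ?_) ⟨huv, le_rfl⟩
  simpa [abs_of_nonneg (sub_nonneg.2 ht.1)] using hf' t u

lemma abs_sub_sub_mul_le (hf : ∀ t, HasDerivAt f (f' t) t)
    (hf' : ∀ s t, |f' s - f' t| ≤ K * |s - t|) (u v : ℝ) :
    |f v - f u - (v - u) * f' u| ≤ K * (v - u) ^ 2 / 2 := by
  rcases le_total u v with huv | hvu
  · exact abs_sub_sub_mul_le_of_le hf hf' huv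
  · have hg : ∀ t, HasDerivAt (fun t => f (-t)) (-f' (-t)) t := fun t => by
      simpa using (hf (0 - t)).comp_const_sub 0 t
    have hg' : ∀ s t, |-f' (-s) - -f' (-t)| ≤ K * |s - t| := fun s t => by
      rw [neg_sub_neg, abs_sub_comm, ← abs_neg (s - t), neg_sub']
      exact hf' (-s) (-t)
    have := abs_sub_sub_mul_le_of_le hg hg' (neg_le_neg hvu)
    simp only [neg_neg] at this
    convert this using 2 <;> ring

lemma abs_mul_deriv_sub_sub_le (hf : ∀ t, HasDerivAt f (f' t) t)
    (hf' : ∀ s t, |f' s - f' t| ≤ K * |s - t|) (u : ℝ) {h δ : ℝ} (hδ : 0 ≤ δ) (hδh : δ ≤ h) :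
    |h * f' (u + h) - ((f (u + h) + δ * f' (u + h)) - (f u + δ * f' u))| ≤ K * h ^ 2 / 2 := by
  have hK := nonneg_of_abs_sub_le_mul_abs hf'
  have hright := abs_sub_sub_mul_le hf hf' (u + h) (u + δ)
  have hleft := abs_sub_sub_mul_le hf hf' u (u + δ)
  calc _ = |(f (u + δ) - f (u + h) - (u + δ - (u + h)) * f' (u + h))
          - (f (u + δ) - f u - (u + δ - u) * f' u)| := by congr 1; ring
    _ ≤ K * (u + δ - (u + h)) ^ 2 / 2 + K * (u + δ - u) ^ 2 / 2 :=
      (abs_sub _ _).trans (add_le_add hright hleft)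
    _ ≤ K * h ^ 2 / 2 := by nlinarith [mul_nonneg (mul_nonneg hK hδ) (sub_nonneg.2 hδh)]

lemma abs_sum_mul_deriv_sub_le (hf : ∀ t, HasDerivAt f (f' t) t)
    (hf' : ∀ s t, |f' s - f' t| ≤ K * |s - t|) (b₀ : ℝ) {h δ : ℝ} (hδ : 0 ≤ δ) (hδh : δ ≤ h)
    (k : ℕ) :
    |∑ j ∈ Icc 1 k, h * f' (b₀ + j * h) - (f (b₀ + k * h + δ) - f b₀ - δ * f' b₀)|
      ≤ (k + 1) * (K * h ^ 2 / 2) := by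
  set G : ℝ → ℝ := fun t => f t + δ * f' t
  have htele : ∀ n : ℕ, |∑ j ∈ Icc 1 n, h * f' (b₀ + j * h) - (G (b₀ + n * h) - G b₀)|
      ≤ n * (K * h ^ 2 / 2) := by
    intro n
    induction n with
    | zero => simp [G]
    | succ n ih =>
      rw [sum_Icc_succ_top (by omega), show b₀ + ((n + 1 : ℕ) : ℝ) * h = b₀ + n * h + h by
        push_cast; ring]
      calc _ = |(∑ j ∈ Icc 1 n, h * f' (b₀ + j * h) - (G (b₀ + n * h) - G b₀))
            + (h * f' (b₀ + n * h + h) - (G (b₀ + n * h + h) - G (b₀ + n * h)))| := by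
            congr 1; ring
        _ ≤ n * (K * h ^ 2 / 2) + K * h ^ 2 / 2 :=
          (abs_add_le _ _).trans (add_le_add ih (abs_mul_deriv_sub_sub_le hf hf' _ hδ hδh))
        _ = _ := by push_cast; ring
  have hlast := abs_sub_sub_mul_le hf hf' (b₀ + k * h) (b₀ + k * h + δ)
  calc _ = |(∑ j ∈ Icc 1 k, h * f' (b₀ + j * h) - (G (b₀ + k * h) - G b₀))
        - (f (b₀ + k * h + δ) - f (b₀ + k * h)
          - (b₀ + k * h + δ - (b₀ + k * h)) * f' (b₀ + k * h))| := by
        congr 1; simp only [G]; ring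
    _ ≤ k * (K * h ^ 2 / 2) + K * h ^ 2 / 2 := by
      refine (abs_sub _ _).trans (add_le_add (htele k) (hlast.trans ?_))
      have hK := nonneg_of_abs_sub_le_mul_abs hf'
      rw [add_sub_cancel_left]
      gcongr
    _ = _ := by ring

lemma abs_sum_mul_deriv_sub_le_of_floor (hf : ∀ t, HasDerivAt f (f' t) t)
    (hf' : ∀ s t, |f' s - f' t| ≤ K * |s - t|) {b₀ h x : ℝ} (hh : 0 < h) (hx : b₀ ≤ x)
    (hf₀ : f b₀ = 0) (hf'₀ : f' b₀ = 0) :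
    |∑ j ∈ Icc 1 ⌊(x - b₀) / h⌋₊, h * f' (b₀ + j * h) - f x|
      ≤ (⌊(x - b₀) / h⌋₊ + 1) * (K * h ^ 2 / 2) := by
  set k := ⌊(x - b₀) / h⌋₊
  have hk : k * h ≤ x - b₀ :=
    (le_div_iff₀ hh).1 (Nat.floor_le (div_nonneg (sub_nonneg.2 hx) hh.le))
  have hk' : x - b₀ < (k + 1) * h := (div_lt_iff₀ hh).1 (Nat.lt_floor_add_one _)
  have := abs_sum_mul_deriv_sub_le hf hf' b₀ (h := h) (δ := x - (b₀ + k * h))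
    (by linarith) (by linarith) k
  rwa [add_sub_cancel, hf₀, hf'₀, mul_zero, sub_zero, sub_zero] at this

end LipschitzDeriv

lemma HasDerivAt.eq_zero_of_notMem_Ioo {f : ℝ → ℝ} {f' a₁ a₂ y : ℝ} (hf : HasDerivAt f f' y)
    (hsupp : ∀ x ∉ Ioo a₁ a₂, f x = 0) (hy : y ∉ Ioo a₁ a₂) : f' = 0 := by
  rcases le_or_gt y a₁ with hya | hya
  · have hzero : ∀ x ∈ Iic y, f x = 0 := fun x hx => hsupp x fun hm => by
      linarith [hm.1, mem_Iic.1 hx]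
    exact (uniqueDiffWithinAt_Iic y).eq_deriv _ hf.hasDerivWithinAt
      ((hasDerivWithinAt_const y _ 0).congr_of_mem hzero (le_refl y))
  · have hay : a₂ ≤ y := not_lt.1 fun h => hy ⟨hya, h⟩
    have hzero : ∀ x ∈ Ici y, f x = 0 := fun x hx => hsupp x fun hm => by
      linarith [hm.2, mem_Ici.1 hx]
    exact (uniqueDiffWithinAt_Ici y).eq_deriv _ hf.hasDerivWithinAt
      ((hasDerivWithinAt_const y _ 0).congr_of_mem hzero (le_refl y))

lemma sum_mul_heaviside_sub_grid (c : ℕ → ℝ) {b₀ h x : ℝ} (hh : 0 < h) (hx : b₀ ≤ x) {τ : ℕ}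
    (hτ : ⌊(x - b₀) / h⌋₊ ≤ τ) :
    ∑ j ∈ Icc 1 τ, c j * heaviside (x - (b₀ + j * h)) = ∑ j ∈ Icc 1 ⌊(x - b₀) / h⌋₊, c j := by
  have hH : ∀ j : ℕ, heaviside (x - (b₀ + j * h)) = if j ≤ ⌊(x - b₀) / h⌋₊ then 1 else 0 := by
    intro j
    simp only [heaviside, Nat.le_floor_iff (div_nonneg (sub_nonneg.2 hx) hh.le), le_div_iff₀ hh,
      le_sub_iff_add_le', add_zero]
  simp only [hH, mul_ite, mul_one, mul_zero, ← sum_filter]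
  congr 1
  ext j
  simp only [mem_filter, Finset.mem_Icc]
  omega

lemma abs_sum_round_add_round_sub_le {ι : Type*} (s : Finset ι) (a : ι → ℝ) (c y : ℝ)
    {r : ℝ → ℝ} {ε : ℝ} (hr : ∀ t, |t - r t| ≤ ε) :
    |∑ i ∈ s, r (a i) + r c - y| ≤ (#s + 1) * ε + |∑ i ∈ s, a i + c - y| := by
  have hr' : ∀ t, |r t - t| ≤ ε := fun t => (abs_sub_comm _ _).trans_le (hr t)
  calc _ = |∑ i ∈ s, (r (a i) - a i) + (r c - c) + (∑ i ∈ s, a i + c - y)| := by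
        rw [sum_sub_distrib]; ring_nf
    _ ≤ ∑ i ∈ s, |r (a i) - a i| + |r c - c| + |∑ i ∈ s, a i + c - y| :=
      (abs_add_three _ _ _).trans (by gcongr; exact abs_sum_le_sum_abs _ _)
    _ ≤ #s * ε + ε + |∑ i ∈ s, a i + c - y| := by
      gcongr
      · simpa using sum_le_card_nsmul s _ ε fun i _ => hr' (a i)
      · exact hr' c
    _ = _ := by ring

theorem discretized_network_approximation_error_general
    (M₁ R φ₂ a₁ a₂ : ℝ)
    (Ψ Ψ' : ℝ → ℝ)
    (hΨ' : ∀ x : ℝ, HasDerivAt Ψ (Ψ' x) x)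
    (hΨ'_lip : ∀ x y : ℝ, |Ψ' x - Ψ' y| ≤ φ₂ * |x - y|)
    (hsub : Set.Ioo a₁ a₂ ⊆ Set.Ioo (-(M₁ * R)) (M₁ * R))
    (hsupp : ∀ x : ℝ, x ∉ Set.Ioo a₁ a₂ → Ψ x = 0)
    (τ : ℕ) (hτ : 2 ≤ τ)
    (b : ℕ → ℝ) (hb : ∀ j, b j = (-1 + 2 * (j : ℝ) / (τ : ℝ)) * (M₁ * R))
    (w : ℕ → ℝ)
    (hw : ∀ j, w j = if a₁ < b j ∧ b j < a₂ then (2 * M₁ * R / (τ : ℝ)) * Ψ' (b j) else 0)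
    (wc : ℝ) (hwc : wc = Ψ a₁)
    (η : ℝ) (hη : 0 < η)
    (rnd : ℝ → ℝ)
    (hrnd_close : ∀ t : ℝ, |t - rnd t| ≤ η / 2) :
    ∀ x ∈ Set.Ioo a₁ a₂,
      |(∑ j ∈ Finset.Icc 1 τ, rnd (w j) * heaviside (x - b j) + rnd wc) - Ψ x|
        ≤ (τ + 1) * η / 2 + 2 * M₁ ^ 2 * R ^ 2 * φ₂ / (τ : ℝ) := by
  intro x hx
  obtain ⟨hx₁, hx₂⟩ := hsub hx
  have hτ₀ : (0 : ℝ) < τ := Nat.cast_pos.2 (by omega)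
  set h := 2 * M₁ * R / τ with h_def
  have hh : 0 < h := div_pos (by linarith) hτ₀
  have hb' : ∀ j : ℕ, b j = -(M₁ * R) + j * h := fun j => by rw [hb, h_def]; ring
  have hb₀ : -(M₁ * R) ∉ Ioo a₁ a₂ := fun hm => lt_irrefl _ (hsub hm).1
  have hw' : ∀ j, w j = h * Ψ' (-(M₁ * R) + j * h) := fun j => by
    rw [hw, ← hb', ite_eq_left_iff]
    exact fun hj => by rw [(hΨ' _).eq_zero_of_notMem_Ioo hsupp hj, mul_zero]
  set k := ⌊(x - -(M₁ * R)) / h⌋₊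
  have hkτ : k < τ := by
    rw [Nat.floor_lt (div_nonneg (by linarith) hh.le), div_lt_iff₀ hh, h_def,
      mul_div_cancel₀ _ hτ₀.ne']
    linarith
  have hunrounded : |∑ j ∈ Icc 1 k, w j + wc - Ψ x| ≤ (k + 1) * (φ₂ * h ^ 2 / 2) := by
    simpa only [hw', hwc, hsupp a₁ (by simp), add_zero] using
      abs_sum_mul_deriv_sub_le_of_floor hΨ' hΨ'_lip hh hx₁.le (hsupp _ hb₀)
        ((hΨ' _).eq_zero_of_notMem_Ioo hsupp hb₀)
  have hnet : ∑ j ∈ Icc 1 τ, rnd (w j) * heaviside (x - b j) = ∑ j ∈ Icc 1 k, rnd (w j) := by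
    simp only [hb']
    exact sum_mul_heaviside_sub_grid _ hh hx₁.le hkτ.le
  have hφ₂ := nonneg_of_abs_sub_le_mul_abs hΨ'_lip
  have hkτ' : (k : ℝ) + 1 ≤ τ := by exact_mod_cast hkτ
  have hτh : τ * (φ₂ * h ^ 2 / 2) = 2 * M₁ ^ 2 * R ^ 2 * φ₂ / τ := by rw [h_def]; field_simp
  calc _ = |∑ j ∈ Icc 1 k, rnd (w j) + rnd wc - Ψ x| := by rw [hnet]
    _ ≤ (k + 1) * (η / 2) + (k + 1) * (φ₂ * h ^ 2 / 2) := by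
      have hround := abs_sum_round_add_round_sub_le (Icc 1 k) w wc (Ψ x) hrnd_close
      rw [Nat.card_Icc, Nat.add_sub_cancel] at hround
      exact hround.trans (add_le_add le_rfl hunrounded)
    _ ≤ τ * (η / 2) + τ * (φ₂ * h ^ 2 / 2) := by gcongr
    _ ≤ _ := by rw [hτh]; linarith

/-- **approximation error of the discretized two-layer network.** Let `Ψ` be
`φ₁`-Lipschitz and `φ₂`-smooth, vanishing outside its support `(a₁, a₂) ⊆ (-M₁R, M₁R)` with
`0 ∈ (a₁, a₂)` and `Ψ(0) = 0`. With breakpoints `b_j = (-1 + 2j/τ)·M₁R`, weights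
`w^{(j)} = (2M₁R/τ)·Ψ'(b_j)` for `b_j ∈ (a₁, a₂)` (else `0`), constant weight `w^{(c)} = Ψ(a₁)`,
and each weight rounded by `rnd` to a nearest element of `η·ℤ` (so `|t - rnd t| ≤ η/2`), the
discretized network `ψ_w^{(τ,η)}(x) = Σ_j [w^{(j)}]_η·H(x - b_j) + [w^{(c)}]_η` satisfies, for
all `x ∈ (a₁, a₂)`, `|ψ_w^{(τ,η)}(x) - Ψ(x)| ≤ (τ+1)η/2 + 2M₁²R²φ₂/τ`. -/
theorem discretized_network_approximation_error
    (M₁ R φ₁ φ₂ a₁ a₂ : ℝ) (hM₁ : 0 < M₁) (hR : 0 < R)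
    (Ψ Ψ' : ℝ → ℝ)
    (hΨ_lip : ∀ x y : ℝ, |Ψ x - Ψ y| ≤ φ₁ * |x - y|)
    (hΨ' : ∀ x : ℝ, HasDerivAt Ψ (Ψ' x) x)
    (hΨ'_lip : ∀ x y : ℝ, |Ψ' x - Ψ' y| ≤ φ₂ * |x - y|)
    (hsub : Set.Ioo a₁ a₂ ⊆ Set.Ioo (-(M₁ * R)) (M₁ * R))
    (hsupp : ∀ x : ℝ, x ∉ Set.Ioo a₁ a₂ → Ψ x = 0)
    (h0 : 0 ∈ Set.Ioo a₁ a₂) (hΨ0 : Ψ 0 = 0)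
    (τ : ℕ) (hτ : 2 ≤ τ)
    (b : ℕ → ℝ) (hb : ∀ j, b j = (-1 + 2 * (j : ℝ) / (τ : ℝ)) * (M₁ * R))
    (w : ℕ → ℝ)
    (hw : ∀ j, w j = if a₁ < b j ∧ b j < a₂ then (2 * M₁ * R / (τ : ℝ)) * Ψ' (b j) else 0)
    (wc : ℝ) (hwc : wc = Ψ a₁)
    (η : ℝ) (hη : 0 < η)
    (rnd : ℝ → ℝ) (hrnd_mem : ∀ t : ℝ, ∃ m : ℤ, rnd t = η * m)
    (hrnd_close : ∀ t : ℝ, |t - rnd t| ≤ η / 2) :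
    ∀ x ∈ Set.Ioo a₁ a₂,
      |(∑ j ∈ Finset.Icc 1 τ, rnd (w j) * heaviside (x - b j) + rnd wc) - Ψ x|
        ≤ (τ + 1) * η / 2 + 2 * M₁ ^ 2 * R ^ 2 * φ₂ / (τ : ℝ) :=
  discretized_network_approximation_error_general M₁ R φ₂ a₁ a₂ Ψ Ψ' hΨ' hΨ'_lip hsub hsupp τ hτ b
    hb w hw wc hwc η hη rnd hrnd_close
end
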